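/- arXiv:0908.4012 — 7 statements merged into one kernel-verified Lean document; each statement's English description precedes it below -/
import Mathlib

section
/- The function h : [0,1) → ℝ defined by h(κ) = ∫₀^π (1−κ²) / (4π (1+κ²−2κ cos θ)^{3/2}) dθ is strictly increasing on [0,1). -/
open MeasureTheory Real Set

/-- The angular average of the three-dimensional Henyey–Greenstein phase function. -/
noncomputable def hgAverage3 (κ : ℝ) : ℝ :=
  ∫ θ in Set.Ioo (0:ℝ) π, (1 - κ^2) / (4 * π * (1 + κ^2 - 2*κ*Real.cos θ) ^ ((3:ℝ)/2))


noncomputable def dd (κ θ : ℝ) : ℝ := 1 + κ^2 - 2*κ*Real.cos θ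
noncomputable def FF (κ θ : ℝ) : ℝ := (1 - κ^2) / (4 * π * (dd κ θ) ^ ((3:ℝ)/2))
noncomputable def FD (κ θ : ℝ) : ℝ :=
  (κ^3 + κ^2*Real.cos θ - 5*κ + 3*Real.cos θ) / (4 * π * (dd κ θ) ^ ((5:ℝ)/2))
noncomputable def GG (κ θ : ℝ) : ℝ := 3 * Real.sin θ / (4 * π * (dd κ θ) ^ ((3:ℝ)/2))
noncomputable def PP (κ θ : ℝ) : ℝ :=
  κ / (4 * π * (dd κ θ) ^ ((3:ℝ)/2)) + 3*κ*(Real.sin θ)^2 / (4 * π * (dd κ θ) ^ ((5:ℝ)/2))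

lemma dd_pos {κ : ℝ} (h0 : 0 ≤ κ) (h1 : κ < 1) (θ : ℝ) : 0 < dd κ θ := by
  have hc := Real.cos_le_one θ
  have := Real.neg_one_le_cos θ
  unfold dd; nlinarith [sq_nonneg (1-κ)]

lemma rpow_32 {t : ℝ} (ht : 0 < t) : t ^ ((3:ℝ)/2) = t * Real.sqrt t := by
  rw [show (3:ℝ)/2 = 1 + 1/2 by norm_num, Real.rpow_add ht, Real.rpow_one, Real.sqrt_eq_rpow]

lemma rpow_52 {t : ℝ} (ht : 0 < t) : t ^ ((5:ℝ)/2) = t^2 * Real.sqrt t := by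
  rw [show (5:ℝ)/2 = 2 + 1/2 by norm_num, Real.rpow_add ht, Real.sqrt_eq_rpow,
    show ((2:ℝ):ℝ) = ((2:ℕ):ℝ) by norm_num]
  norm_num [Real.rpow_natCast]

lemma cont_dd (κ : ℝ) : Continuous (fun θ => dd κ θ) := by
  unfold dd; fun_prop

lemma dd_ne {κ : ℝ} (h0 : 0 ≤ κ) (h1 : κ < 1) (θ : ℝ) :
    4 * π * (dd κ θ) ^ ((3:ℝ)/2) ≠ 0 := by
  have := dd_pos h0 h1 θ; positivity

lemma dd_ne' {κ : ℝ} (h0 : 0 ≤ κ) (h1 : κ < 1) (θ : ℝ) :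
    4 * π * (dd κ θ) ^ ((5:ℝ)/2) ≠ 0 := by
  have := dd_pos h0 h1 θ; positivity

lemma cont_den32 (κ : ℝ) : Continuous (fun θ => 4 * π * (dd κ θ) ^ ((3:ℝ)/2)) :=
  continuous_const.mul ((cont_dd κ).rpow_const (fun x => Or.inr (by norm_num)))

lemma cont_den52 (κ : ℝ) : Continuous (fun θ => 4 * π * (dd κ θ) ^ ((5:ℝ)/2)) :=
  continuous_const.mul ((cont_dd κ).rpow_const (fun x => Or.inr (by norm_num)))

lemma cont_FD {κ : ℝ} (h0 : 0 ≤ κ) (h1 : κ < 1) : Continuous (fun θ => FD κ θ) := by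
  unfold FD
  exact (by fun_prop : Continuous fun θ => κ^3 + κ^2*Real.cos θ - 5*κ + 3*Real.cos θ).div
    (cont_den52 κ) (dd_ne' h0 h1)

lemma cont_PP {κ : ℝ} (h0 : 0 ≤ κ) (h1 : κ < 1) : Continuous (fun θ => PP κ θ) := by
  unfold PP
  exact (continuous_const.div (cont_den32 κ) (dd_ne h0 h1)).add
    ((by fun_prop : Continuous fun θ => 3*κ*(Real.sin θ)^2).div (cont_den52 κ) (dd_ne' h0 h1))

lemma cont_FF {κ : ℝ} (h0 : 0 ≤ κ) (h1 : κ < 1) : Continuous (fun θ => FF κ θ) := by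
  unfold FF
  exact continuous_const.div (cont_den32 κ) (dd_ne h0 h1)

lemma hasDerivAt_FF {κ : ℝ} (h0 : 0 ≤ κ) (h1 : κ < 1) (θ : ℝ) :
    HasDerivAt (fun k => FF k θ) (FD κ θ) κ := by
  have hd : 0 < dd κ θ := dd_pos h0 h1 θ
  set c := Real.cos θ with hc
  have hdd : HasDerivAt (fun k : ℝ => dd k θ) (2*κ - 2*c) κ := by
    have : HasDerivAt (fun k : ℝ => 1 + k^2 - 2*k*c) (0 + 2*κ - (2*c)) κ := by
      have h2 : HasDerivAt (fun k : ℝ => k^2) (2*κ) κ := by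
        simpa using hasDerivAt_pow 2 κ
      have h3 : HasDerivAt (fun k : ℝ => 2*k*c) (2*c) κ := by
        have : HasDerivAt (fun k : ℝ => k * (2*c)) (2*c) κ := by
          simpa using (hasDerivAt_id κ).mul_const (2*c)
        simpa [mul_comm, mul_assoc, mul_left_comm] using this
      exact ((hasDerivAt_const κ (1:ℝ)).add h2).sub h3
    simpa [dd, hc] using this.congr_deriv (by ring)
  have h32 : HasDerivAt (fun k => (dd k θ) ^ ((3:ℝ)/2))
      ((2*κ - 2*c) * ((3:ℝ)/2) * (dd κ θ) ^ ((3:ℝ)/2 - 1)) κ :=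
    hdd.rpow_const (Or.inr (by norm_num))
  have hden : HasDerivAt (fun k => 4 * π * (dd k θ) ^ ((3:ℝ)/2))
      (4 * π * ((2*κ - 2*c) * ((3:ℝ)/2) * (dd κ θ) ^ ((3:ℝ)/2 - 1))) κ :=
    h32.const_mul (4 * π)
  have hnum : HasDerivAt (fun k : ℝ => 1 - k^2) (-(2*κ)) κ := by
    exact ((hasDerivAt_const κ (1:ℝ)).sub (by simpa using hasDerivAt_pow 2 κ :
      HasDerivAt (fun k : ℝ => k^2) (2*κ) κ)).congr_deriv (by ring)
  have hden_ne : 4 * π * (dd κ θ) ^ ((3:ℝ)/2) ≠ 0 := by positivity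
  have hdiv := hnum.div hden hden_ne
  refine hdiv.congr_deriv (Eq.symm ?_)
  unfold FD
  rw [rpow_52 hd, rpow_32 hd, show (3:ℝ)/2 - 1 = 1/2 by norm_num, ← Real.sqrt_eq_rpow]
  have hr : (0:ℝ) < Real.sqrt (dd κ θ) := Real.sqrt_pos.mpr hd
  set r := Real.sqrt (dd κ θ) with hrdef
  set t := dd κ θ with htdef
  have htv : t = 1 + κ^2 - 2*κ*c := rfl
  have hπ : π ≠ 0 := Real.pi_ne_zero
  field_simp
  linear_combination (2*κ) * htv

lemma hasDerivAt_GG {κ : ℝ} (h0 : 0 ≤ κ) (h1 : κ < 1) (θ : ℝ) :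
    HasDerivAt (fun x => GG κ x) (FD κ θ - PP κ θ) θ := by
  have hd : 0 < dd κ θ := dd_pos h0 h1 θ
  have hdd : HasDerivAt (fun x : ℝ => dd κ x) (2*κ*Real.sin θ) θ := by
    have h1' : HasDerivAt (fun x : ℝ => Real.cos x) (-Real.sin θ) θ := Real.hasDerivAt_cos θ
    have : HasDerivAt (fun x : ℝ => 1 + κ^2 - 2*κ*Real.cos x) (-(2*κ*(-Real.sin θ))) θ := by
      exact ((hasDerivAt_const θ (1+κ^2)).sub ((h1'.const_mul (2*κ)))).congr_deriv (by ring)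
    simpa [dd] using this.congr_deriv (by ring)
  have h32 : HasDerivAt (fun x => (dd κ x) ^ ((3:ℝ)/2))
      ((2*κ*Real.sin θ) * ((3:ℝ)/2) * (dd κ θ) ^ ((3:ℝ)/2 - 1)) θ :=
    hdd.rpow_const (Or.inr (by norm_num))
  have hden : HasDerivAt (fun x => 4 * π * (dd κ x) ^ ((3:ℝ)/2))
      (4 * π * ((2*κ*Real.sin θ) * ((3:ℝ)/2) * (dd κ θ) ^ ((3:ℝ)/2 - 1))) θ :=
    h32.const_mul (4 * π)
  have hnum : HasDerivAt (fun x : ℝ => 3 * Real.sin x) (3 * Real.cos θ) θ :=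
    (Real.hasDerivAt_sin θ).const_mul 3
  have hdiv := hnum.div hden (dd_ne h0 h1 θ)
  refine hdiv.congr_deriv (Eq.symm ?_)
  unfold FD PP
  rw [rpow_52 hd, rpow_32 hd, show (3:ℝ)/2 - 1 = 1/2 by norm_num, ← Real.sqrt_eq_rpow]
  have hr : (0:ℝ) < Real.sqrt (dd κ θ) := Real.sqrt_pos.mpr hd
  set r := Real.sqrt (dd κ θ) with hrdef
  set s := Real.sin θ with hsdef
  set c := Real.cos θ with hcdef
  have hr2 : r ^ 2 = dd κ θ := Real.sq_sqrt hd.le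
  set t := dd κ θ with htdef
  have htv : t = 1 + κ^2 - 2*κ*c := rfl
  have hsc : s^2 + c^2 = 1 := Real.sin_sq_add_cos_sq θ
  have hπ : π ≠ 0 := Real.pi_ne_zero
  field_simp
  linear_combination (-(κ+3*c)) * htv + (6*κ) * hsc

lemma GG_zero (κ : ℝ) : GG κ 0 = 0 := by simp [GG]

lemma GG_pi (κ : ℝ) : GG κ π = 0 := by simp [GG]

lemma PP_pos {κ : ℝ} (h0 : 0 < κ) (h1 : κ < 1) (θ : ℝ) : 0 < PP κ θ := by
  have hd := dd_pos h0.le h1 θ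
  have h32 : (0:ℝ) < 4 * π * (dd κ θ) ^ ((3:ℝ)/2) := by positivity
  have h52 : (0:ℝ) < 4 * π * (dd κ θ) ^ ((5:ℝ)/2) := by positivity
  unfold PP
  have : (0:ℝ) ≤ 3*κ*(Real.sin θ)^2 := by positivity
  exact add_pos_of_pos_of_nonneg (div_pos h0 h32) (div_nonneg this h52.le)

lemma inner_pos {κ : ℝ} (h0 : 0 < κ) (h1 : κ < 1) :
    0 < ∫ θ in (0:ℝ)..π, FD κ θ := by
  have hFDi : IntervalIntegrable (fun θ => FD κ θ) volume 0 π :=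
    (cont_FD h0.le h1).intervalIntegrable _ _
  have hPPi : IntervalIntegrable (fun θ => PP κ θ) volume 0 π :=
    (cont_PP h0.le h1).intervalIntegrable _ _
  have key : ∫ θ in (0:ℝ)..π, (FD κ θ - PP κ θ) = GG κ π - GG κ 0 :=
    intervalIntegral.integral_eq_sub_of_hasDerivAt
      (fun θ _ => hasDerivAt_GG h0.le h1 θ) (hFDi.sub hPPi)
  rw [GG_pi, GG_zero, sub_zero, intervalIntegral.integral_sub hFDi hPPi, sub_eq_zero] at key
  rw [key]
  exact intervalIntegral.intervalIntegral_pos_of_pos_on hPPi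
    (fun θ _ => PP_pos h0 h1 θ) Real.pi_pos

lemma hg_eq (κ : ℝ) : hgAverage3 κ = ∫ θ in (0:ℝ)..π, FF κ θ := by
  unfold hgAverage3 FF dd
  rw [← MeasureTheory.integral_Ioc_eq_integral_Ioo,
    ← intervalIntegral.integral_of_le Real.pi_pos.le]

/-- The function `h(κ) = ∫₀^π (1−κ²)/(4π(1+κ²−2κ cos θ)^{3/2}) dθ` is strictly increasing
on `[0,1)`. -/
theorem hgAverage3_strictMonoOn : StrictMonoOn hgAverage3 (Set.Ico (0:ℝ) 1) := by
  intro a ha b hb hab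
  have ha0 : (0:ℝ) ≤ a := ha.1
  have hb1 : b < 1 := hb.2
  have ha1 : a < 1 := lt_trans hab hb1
  have hb0 : (0:ℝ) ≤ b := le_trans ha0 hab.le
  have contDD : Continuous (fun p : ℝ × ℝ => dd p.2 p.1) := by
    unfold dd; fun_prop
  have contNum : Continuous (fun p : ℝ × ℝ =>
      p.2^3 + p.2^2*Real.cos p.1 - 5*p.2 + 3*Real.cos p.1) := by fun_prop
  have contDen : Continuous (fun p : ℝ × ℝ => 4 * π * (dd p.2 p.1) ^ ((5:ℝ)/2)) :=
    continuous_const.mul (contDD.rpow_const (fun x => Or.inr (by norm_num)))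
  have hcontOn : ContinuousOn (fun p : ℝ × ℝ => FD p.2 p.1) (Icc 0 π ×ˢ Icc a b) := by
    unfold FD
    exact ContinuousOn.div contNum.continuousOn contDen.continuousOn
      (fun p hp => dd_ne' (le_trans ha0 hp.2.1) (lt_of_le_of_lt hp.2.2 hb1) p.1)
  have hInt : MeasureTheory.Integrable (Function.uncurry fun θ k => FD k θ)
      ((volume.restrict (Ioc (0:ℝ) π)).prod (volume.restrict (Ioc a b))) := by
    rw [MeasureTheory.Measure.prod_restrict]
    have hcompact : IsCompact (Icc (0:ℝ) π ×ˢ Icc a b) := isCompact_Icc.prod isCompact_Icc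
    have h2 : MeasureTheory.IntegrableOn (fun p : ℝ × ℝ => FD p.2 p.1)
        (Icc (0:ℝ) π ×ˢ Icc a b) (volume.prod volume) := by
      rw [← MeasureTheory.Measure.volume_eq_prod]
      exact hcontOn.integrableOn_compact hcompact
    rw [← MeasureTheory.Measure.volume_eq_prod]
    exact (h2.mono_set (Set.prod_mono Ioc_subset_Icc_self Ioc_subset_Icc_self))
  have ftc : ∀ θ : ℝ, FF b θ - FF a θ = ∫ k in a..b, FD k θ := by
    intro θ
    refine (intervalIntegral.integral_eq_sub_of_hasDerivAt (f := fun k => FF k θ)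
      (f' := fun k => FD k θ) (fun k hk => ?_) ?_).symm
    · rw [Set.uIcc_of_le hab.le] at hk
      exact hasDerivAt_FF (le_trans ha0 hk.1) (lt_of_le_of_lt hk.2 hb1) θ
    · apply ContinuousOn.intervalIntegrable
      rw [Set.uIcc_of_le hab.le]
      unfold FD
      refine ContinuousOn.div (by fun_prop) ?_ ?_
      · exact (continuous_const.mul
          ((by unfold dd; fun_prop : Continuous fun k : ℝ => dd k θ).rpow_const
            (fun x => Or.inr (by norm_num)))).continuousOn
      · exact fun k hk => dd_ne' (le_trans ha0 hk.1) (lt_of_le_of_lt hk.2 hb1) θ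
  have key : hgAverage3 b - hgAverage3 a
      = ∫ k in Ioc a b, ∫ θ in Ioc (0:ℝ) π, FD k θ := by
    rw [hg_eq, hg_eq, ← intervalIntegral.integral_sub
      ((cont_FF hb0 hb1).intervalIntegrable _ _) ((cont_FF ha0 ha1).intervalIntegrable _ _)]
    calc ∫ θ in (0:ℝ)..π, (FF b θ - FF a θ)
        = ∫ θ in (0:ℝ)..π, ∫ k in a..b, FD k θ := by simp only [ftc]
      _ = ∫ θ in Ioc (0:ℝ) π, ∫ k in Ioc a b, FD k θ := by
          simp only [intervalIntegral.integral_of_le hab.le,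
            intervalIntegral.integral_of_le Real.pi_pos.le]
      _ = ∫ k in Ioc a b, ∫ θ in Ioc (0:ℝ) π, FD k θ :=
          MeasureTheory.integral_integral_swap hInt
  have hgInt : IntervalIntegrable (fun k => ∫ θ in Ioc (0:ℝ) π, FD k θ) volume a b := by
    rw [intervalIntegrable_iff_integrableOn_Ioc_of_le hab.le]
    exact hInt.integral_prod_right
  have hpos : 0 < ∫ k in Ioc a b, ∫ θ in Ioc (0:ℝ) π, FD k θ := by
    rw [← intervalIntegral.integral_of_le hab.le]
    refine intervalIntegral.intervalIntegral_pos_of_pos_on hgInt (fun k hk => ?_) hab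
    rw [← intervalIntegral.integral_of_le Real.pi_pos.le]
    exact inner_pos (lt_of_le_of_lt ha0 hk.1) (lt_trans hk.2 hb1)
  linarith [key ▸ hpos]
end

section
/- With h(κ) = ∫₀^π (1−κ²) / (4π (1+κ²−2κ cos θ)^{3/2}) dθ for κ ∈ [0,1), one has lim_{g→1⁻} (1−g) h(g) = 1/(2π). -/
set_option maxHeartbeats 1000000

open MeasureTheory Real Set

open Filter


lemma aux_rpow32 {u : ℝ} (hu : 0 < u) : u ^ ((3:ℝ)/2) = u * Real.sqrt u := by
  rw [Real.sqrt_eq_rpow, show (3:ℝ)/2 = 1 + 1/2 by norm_num, Real.rpow_add hu, Real.rpow_one]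

lemma aux_pow32 {ε : ℝ} (hε : 0 ≤ ε) : (ε^2) ^ ((3:ℝ)/2) = ε^3 := by
  rw [← Real.rpow_natCast ε 2, ← Real.rpow_mul hε]
  norm_num

lemma aux_D (g u : ℝ) : 1 + g^2 - 2*g*Real.cos u = (1-g)^2 + 4*g*(Real.sin (u/2))^2 := by
  have h := Real.sin_sq_eq_half_sub (u/2)
  rw [show 2*(u/2) = u by ring] at h
  nlinarith [h]

lemma aux_deriv (x : ℝ) : HasDerivAt (fun x : ℝ => x / Real.sqrt (1+x^2))
    (((1+x^2) ^ ((3:ℝ)/2))⁻¹) x := by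
  have h0 : (0:ℝ) < 1 + x^2 := by positivity
  have hs : 0 < Real.sqrt (1+x^2) := Real.sqrt_pos.2 h0
  have h1 : HasDerivAt (fun x:ℝ => 1 + x^2) (2*x) x := by
    simpa using (hasDerivAt_pow 2 x).const_add 1
  have h2 : HasDerivAt (fun x => Real.sqrt (1+x^2)) (1/(2*Real.sqrt (1+x^2)) * (2*x)) x :=
    (Real.hasDerivAt_sqrt h0.ne').comp x h1
  have h3 := (hasDerivAt_id x).div h2 hs.ne'
  refine HasDerivAt.congr_deriv h3 ?_
  rw [aux_rpow32 h0]
  have hsq : Real.sqrt (1+x^2)^2 = 1+x^2 := Real.sq_sqrt h0.le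
  have hms : Real.sqrt (1+x^2) * Real.sqrt (1+x^2) = 1+x^2 := Real.mul_self_sqrt h0.le
  rw [hsq]
  field_simp
  simp only [id]
  linear_combination hsq


lemma aux_tendsto : Tendsto (fun x : ℝ => x / Real.sqrt (1+x^2)) atTop (nhds 1) := by
  have hx2 : Tendsto (fun x:ℝ => 1+x^2) atTop atTop :=
    tendsto_atTop_add_const_left _ 1 (tendsto_pow_atTop two_ne_zero)
  have h1 : Tendsto (fun x:ℝ => 1 - (1+x^2)⁻¹) atTop (nhds 1) := by
    simpa using tendsto_const_nhds.sub (tendsto_inv_atTop_zero.comp hx2)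
  have h2 : Tendsto (fun x:ℝ => Real.sqrt (1 - (1+x^2)⁻¹)) atTop (nhds 1) := by
    have := (Real.continuous_sqrt.tendsto 1).comp h1
    simpa [Function.comp_def] using this
  refine h2.congr' ?_
  filter_upwards [eventually_gt_atTop (0:ℝ)] with x hx
  have h0 : (0:ℝ) < 1 + x^2 := by positivity
  have : 1 - (1+x^2)⁻¹ = x^2/(1+x^2) := by field_simp; ring
  rw [this, Real.sqrt_div (sq_nonneg x), Real.sqrt_sq hx.le]



noncomputable def hgF (g x : ℝ) : ℝ :=
  Set.indicator (Set.Ioo 0 (π/(1-g)))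
    (fun x => (1-g)^2 * ((1 - g^2) / (4 * π * (1 + g^2 - 2*g*Real.cos ((1-g)*x)) ^ ((3:ℝ)/2)))) x

lemma stepA {g : ℝ} (hg : g < 1) : (1 - g) * hgAverage3 g = ∫ x : ℝ, hgF g x := by
  have hε : 0 < 1 - g := by linarith
  have key := MeasureTheory.Measure.integral_comp_mul_left
    (fun θ => Set.indicator (Set.Ioo (0:ℝ) π)
      (fun θ => (1 - g^2) / (4 * π * (1 + g^2 - 2*g*Real.cos θ) ^ ((3:ℝ)/2))) θ) (1-g)
  rw [abs_of_pos (inv_pos.2 hε), smul_eq_mul] at key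
  have h1 : hgAverage3 g
      = ∫ θ : ℝ, Set.indicator (Set.Ioo (0:ℝ) π)
        (fun θ => (1 - g^2) / (4 * π * (1 + g^2 - 2*g*Real.cos θ) ^ ((3:ℝ)/2))) θ := by
    rw [hgAverage3, ← integral_indicator measurableSet_Ioo]
  have h2 : (∫ θ : ℝ, Set.indicator (Set.Ioo (0:ℝ) π)
      (fun θ => (1 - g^2) / (4 * π * (1 + g^2 - 2*g*Real.cos θ) ^ ((3:ℝ)/2))) θ)
      = (1-g) * ∫ x : ℝ, Set.indicator (Set.Ioo (0:ℝ) π)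
      (fun θ => (1 - g^2) / (4 * π * (1 + g^2 - 2*g*Real.cos θ) ^ ((3:ℝ)/2))) ((1-g)*x) := by
    rw [key, ← mul_assoc, mul_inv_cancel₀ hε.ne', one_mul]
  rw [h1, h2, ← mul_assoc, ← MeasureTheory.integral_const_mul]
  congr 1
  funext x
  rw [hgF]
  by_cases hx : x ∈ Set.Ioo 0 (π/(1-g))
  · have hmem : (1-g)*x ∈ Set.Ioo (0:ℝ) π := by
      constructor
      · exact mul_pos hε hx.1
      · rw [mul_comm]; exact (lt_div_iff₀ hε).1 hx.2
    rw [Set.indicator_of_mem hx, Set.indicator_of_mem hmem]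
    ring
  · have hmem : (1-g)*x ∉ Set.Ioo (0:ℝ) π := by
      intro hc
      have hx0 : 0 < x := by nlinarith [hc.1]
      exact hx ⟨hx0, (lt_div_iff₀ hε).2 (by nlinarith [hc.2])⟩
    rw [Set.indicator_of_notMem hx, Set.indicator_of_notMem hmem, mul_zero]



lemma aux_intgb : IntegrableOn (fun x : ℝ => ((1+x^2) ^ ((3:ℝ)/2))⁻¹) (Ioi 0) :=
  integrableOn_Ioi_deriv_of_nonneg' (fun x _ => aux_deriv x)
    (fun x _ => by positivity) aux_tendsto

lemma aux_int : ∫ x in Ioi (0:ℝ), ((1+x^2) ^ ((3:ℝ)/2))⁻¹ = 1 := by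
  have := integral_Ioi_of_hasDerivAt_of_nonneg' (a := 0) (fun x _ => aux_deriv x)
    (fun x _ => by positivity) aux_tendsto
  simpa using this





noncomputable def hgC : ℝ := 2/(4*π*((2/π^2) ^ ((3:ℝ)/2)))

noncomputable def hgBound (x : ℝ) : ℝ :=
  Set.indicator (Ioi (0:ℝ)) (fun x => hgC * ((1+x^2) ^ ((3:ℝ)/2))⁻¹) x

noncomputable def hgLim (x : ℝ) : ℝ :=
  Set.indicator (Ioi (0:ℝ)) (fun x => 1/(2*π) * ((1+x^2) ^ ((3:ℝ)/2))⁻¹) x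

lemma hgF_meas (g : ℝ) : AEStronglyMeasurable (hgF g) volume := by
  have hD : Continuous fun x : ℝ => 1+g^2-2*g*Real.cos ((1-g)*x) := by fun_prop
  have hm : Measurable fun x : ℝ =>
      (1-g)^2 * ((1 - g^2) / (4 * π * (1 + g^2 - 2*g*Real.cos ((1-g)*x)) ^ ((3:ℝ)/2))) :=
    ((measurable_const.div
      ((continuous_const.mul (hD.rpow_const (fun x => Or.inr (by norm_num)))).measurable)).const_mul _)
  exact ((hm.indicator measurableSet_Ioo).aestronglyMeasurable)

lemma hgBound_integrable : Integrable hgBound := by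
  rw [show hgBound = Set.indicator (Ioi (0:ℝ)) (fun x => hgC * ((1+x^2) ^ ((3:ℝ)/2))⁻¹) from rfl, integrable_indicator_iff measurableSet_Ioi]
  exact aux_intgb.const_mul _

lemma hgLim_integral : ∫ x : ℝ, hgLim x = 1/(2*π) := by
  rw [show hgLim = Set.indicator (Ioi (0:ℝ)) (fun x => 1/(2*π) * ((1+x^2) ^ ((3:ℝ)/2))⁻¹) from rfl, integral_indicator measurableSet_Ioi, MeasureTheory.integral_const_mul, aux_int, mul_one]

lemma hg_bound : ∀ᶠ g in nhdsWithin (1:ℝ) (Iio 1), ∀ᵐ x : ℝ, ‖hgF g x‖ ≤ hgBound x := by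
  filter_upwards [Ioo_mem_nhdsLT (show (1:ℝ)/2 < 1 by norm_num)] with g hg
  refine Eventually.of_forall (fun x => ?_)
  have hε : 0 < 1 - g := by linarith [hg.2]
  have hg1 : 1/2 < g := hg.1
  by_cases hx : x ∈ Set.Ioo 0 (π/(1-g))
  · have hx0 : 0 < x := hx.1
    have hxπ : (1-g)*x < π := by
      have := (lt_div_iff₀ hε).1 hx.2
      nlinarith [this]
    set ε := 1 - g with hεdef
    set D := 1 + g^2 - 2*g*Real.cos (ε*x) with hDdef
    have hsin0 : 0 ≤ Real.sin (ε*x/2) := by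
      apply Real.sin_nonneg_of_nonneg_of_le_pi (by positivity)
      nlinarith [hxπ, Real.pi_pos, hx0, hε]
    have hDge : ε^2 ≤ D := by
      rw [hDdef, aux_D]
      nlinarith [sq_nonneg (Real.sin ((ε*x)/2)), hg1]
    have hDpos : 0 < D := lt_of_lt_of_le (by positivity) hDge
    have hval : hgF g x = ε^2 * ((1 - g^2) / (4 * π * D ^ ((3:ℝ)/2))) := by
      rw [show hgF g x = Set.indicator (Set.Ioo 0 (π/(1-g))) (fun x => (1-g)^2 * ((1 - g^2) / (4 * π * (1 + g^2 - 2*g*Real.cos ((1-g)*x)) ^ ((3:ℝ)/2)))) x from rfl, Set.indicator_of_mem hx]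
    -- Jordan inequality
    have hjordan : ε*x ≤ π * Real.sin (ε*x/2) := by
      have h := Real.mul_le_sin (x := ε*x/2) (by positivity) (by nlinarith [hxπ])
      have hπ : 0 < π := Real.pi_pos
      rw [div_mul_eq_mul_div, div_le_iff₀ hπ] at h
      nlinarith [h]
    have hsq : (ε*x)^2 ≤ (π * Real.sin (ε*x/2))^2 :=
      pow_le_pow_left₀ (by positivity) hjordan 2
    have hπ2 : (2:ℝ) ≤ π^2 := by nlinarith [Real.pi_gt_three]
    have hDge2 : (2/π^2) * (ε^2*(1+x^2)) ≤ D := by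
      rw [div_mul_eq_mul_div, div_le_iff₀ (by positivity : (0:ℝ) < π^2), hDdef, aux_D]
      nlinarith [hsq, mul_le_mul_of_nonneg_left hπ2 (sq_nonneg ε),
        mul_le_mul_of_nonneg_right (show (1:ℝ) ≤ 2*g by linarith)
          (mul_nonneg (sq_nonneg π) (sq_nonneg (Real.sin (ε*x/2))))]
    set K := (2/π^2) ^ ((3:ℝ)/2) with hKdef
    have hK : 0 < K := Real.rpow_pos_of_pos (by positivity) _
    have hrp : ε^3 * (K * (1+x^2) ^ ((3:ℝ)/2)) ≤ D ^ ((3:ℝ)/2) := by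
      have h1 := Real.rpow_le_rpow (by positivity) hDge2 (by norm_num : (0:ℝ) ≤ 3/2)
      rw [Real.mul_rpow (by positivity) (by positivity),
          Real.mul_rpow (sq_nonneg ε) (by positivity), aux_pow32 hε.le] at h1
      calc ε^3 * (K * (1+x^2) ^ ((3:ℝ)/2)) = K * (ε^3 * (1+x^2) ^ ((3:ℝ)/2)) := by ring
        _ ≤ D ^ ((3:ℝ)/2) := h1
    have h1x : (0:ℝ) < (1+x^2) ^ ((3:ℝ)/2) := Real.rpow_pos_of_pos (by positivity) _
    have hDr : (0:ℝ) < D ^ ((3:ℝ)/2) := Real.rpow_pos_of_pos hDpos _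
    have hg2le : 1 - g^2 ≤ 2*ε := by nlinarith [hg.2]
    have hnneg : 0 ≤ hgF g x := by
      rw [hval]
      apply mul_nonneg (sq_nonneg _)
      apply div_nonneg (by nlinarith [hg.2, hg1]) (by positivity)
    have hnum : ε^2*(1-g^2) ≤ 2*ε^3 := by
      rw [hεdef]; nlinarith [sq_nonneg ((1-g)^2)]
    rw [Real.norm_eq_abs, abs_of_nonneg hnneg, hval]
    have hBx : hgBound x = hgC * ((1+x^2) ^ ((3:ℝ)/2))⁻¹ := by
      rw [show hgBound x = Set.indicator (Ioi (0:ℝ)) (fun x => hgC * ((1+x^2) ^ ((3:ℝ)/2))⁻¹) x from rfl, Set.indicator_of_mem (mem_Ioi.2 hx0)]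
    rw [hBx]
    calc ε^2 * ((1 - g^2) / (4 * π * D ^ ((3:ℝ)/2)))
        = (ε^2*(1-g^2)) / (4*π*D ^ ((3:ℝ)/2)) := by ring
      _ ≤ (2*ε^3) / (4*π*(ε^3 * (K * (1+x^2) ^ ((3:ℝ)/2)))) := by
          apply div_le_div₀ (by positivity) hnum
            (by apply mul_pos (by positivity) (mul_pos (pow_pos hε 3) (mul_pos hK h1x)))
          exact mul_le_mul_of_nonneg_left hrp (by positivity)
      _ = hgC * ((1+x^2) ^ ((3:ℝ)/2))⁻¹ := by
          rw [show hgC = 2/(4*π*K) from rfl]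
          have hπ0 : π ≠ 0 := Real.pi_ne_zero
          have hK0 : K ≠ 0 := hK.ne'
          have hε0 : ε ≠ 0 := hε.ne'
          have hu0 : (1+x^2) ^ ((3:ℝ)/2) ≠ 0 := h1x.ne'
          field_simp
  · rw [show hgF g x = Set.indicator (Set.Ioo 0 (π/(1-g))) (fun x => (1-g)^2 * ((1 - g^2) / (4 * π * (1 + g^2 - 2*g*Real.cos ((1-g)*x)) ^ ((3:ℝ)/2)))) x from rfl, Set.indicator_of_notMem hx, norm_zero]
    apply Set.indicator_nonneg (fun y hy => ?_)
    have : (0:ℝ) < (2/π^2) ^ ((3:ℝ)/2) := Real.rpow_pos_of_pos (by positivity) _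
    have h1x : (0:ℝ) < (1+y^2) ^ ((3:ℝ)/2) := Real.rpow_pos_of_pos (by positivity) _
    rw [show hgC = 2/(4*π*((2/π^2) ^ ((3:ℝ)/2))) from rfl]
    positivity





lemma hg_lim (x : ℝ) :
    Tendsto (fun g => hgF g x) (nhdsWithin (1:ℝ) (Iio 1)) (nhds (hgLim x)) := by
  by_cases hx0 : 0 < x
  · -- limit of s g = sin((1-g)x/2)/((1-g)x/2)
    have hgid : Tendsto (fun g : ℝ => g) (nhdsWithin (1:ℝ) (Iio 1)) (nhds 1) :=
      tendsto_id.mono_right nhdsWithin_le_nhds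
    have hinner : Tendsto (fun g : ℝ => (1-g)*x/2) (nhdsWithin (1:ℝ) (Iio 1))
        (nhdsWithin (0:ℝ) {0}ᶜ) := by
      rw [tendsto_nhdsWithin_iff]
      constructor
      · have h := Tendsto.sub
          (tendsto_const_nhds : Tendsto (fun _ : ℝ => (1:ℝ)) (nhdsWithin (1:ℝ) (Iio 1)) (nhds 1)) hgid
        have h2 := (h.mul_const x).div_const 2
        simpa using h2
      · filter_upwards [self_mem_nhdsWithin] with g (hg : g < 1)
        have : 0 < (1-g)*x/2 := by
          have h1 : 0 < 1 - g := by linarith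
          positivity
        exact Set.mem_compl_singleton_iff.2 this.ne'
    have hslope := hasDerivAt_iff_tendsto_slope.mp (Real.hasDerivAt_sin 0)
    have hs : Tendsto (fun g : ℝ => Real.sin ((1-g)*x/2) / ((1-g)*x/2))
        (nhdsWithin (1:ℝ) (Iio 1)) (nhds 1) := by
      have := hslope.comp hinner
      rw [Real.cos_zero] at this
      refine this.congr (fun g => ?_)
      simp [Function.comp, slope_def_field]
    have hQ : Tendsto (fun g : ℝ => 1 + g*x^2*(Real.sin ((1-g)*x/2) / ((1-g)*x/2))^2)
        (nhdsWithin (1:ℝ) (Iio 1)) (nhds (1+x^2)) := by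
      have h := Tendsto.add
        (tendsto_const_nhds : Tendsto (fun _ : ℝ => (1:ℝ)) (nhdsWithin (1:ℝ) (Iio 1)) (nhds 1))
        (((hgid.mul_const (x^2)).mul (hs.pow 2)))
      simpa using h
    have h1x : (0:ℝ) < 1 + x^2 := by positivity
    have hQ32 : Tendsto (fun g : ℝ => (1 + g*x^2*(Real.sin ((1-g)*x/2) / ((1-g)*x/2))^2) ^ ((3:ℝ)/2))
        (nhdsWithin (1:ℝ) (Iio 1)) (nhds ((1+x^2) ^ ((3:ℝ)/2))) :=
      hQ.rpow_const (Or.inl h1x.ne')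
    have h1x32 : (0:ℝ) < (1+x^2) ^ ((3:ℝ)/2) := Real.rpow_pos_of_pos h1x _
    have hT : Tendsto (fun g : ℝ =>
        (1+g)/(4*π*(1 + g*x^2*(Real.sin ((1-g)*x/2) / ((1-g)*x/2))^2) ^ ((3:ℝ)/2)))
        (nhdsWithin (1:ℝ) (Iio 1)) (nhds ((1+1)/(4*π*(1+x^2) ^ ((3:ℝ)/2)))) := by
      apply Tendsto.div (Tendsto.add
        (tendsto_const_nhds : Tendsto (fun _ : ℝ => (1:ℝ)) (nhdsWithin (1:ℝ) (Iio 1)) (nhds 1)) hgid)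
        (Tendsto.mul
        (tendsto_const_nhds : Tendsto (fun _ : ℝ => (4*π : ℝ)) (nhdsWithin (1:ℝ) (Iio 1)) (nhds (4*π))) hQ32)
      positivity
    have hFx : hgLim x = (1+1)/(4*π*(1+x^2) ^ ((3:ℝ)/2)) := by
      rw [show hgLim x = Set.indicator (Ioi (0:ℝ))
        (fun x => 1/(2*π) * ((1+x^2) ^ ((3:ℝ)/2))⁻¹) x from rfl,
        Set.indicator_of_mem (mem_Ioi.2 hx0)]
      have hπ0 : π ≠ 0 := Real.pi_ne_zero
      field_simp
      ring
    rw [hFx]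
    refine hT.congr' ?_
    have hm : max (1/2 : ℝ) (1 - π/x) < 1 := by
      apply max_lt (by norm_num)
      have : 0 < π/x := by positivity
      linarith
    filter_upwards [Ioo_mem_nhdsLT hm] with g hg
    have hε : 0 < 1 - g := by linarith [hg.2]
    have hg1 : 1/2 < g := lt_of_le_of_lt (le_max_left _ _) hg.1
    have hπx : 1 - π/x < g := lt_of_le_of_lt (le_max_right _ _) hg.1
    have hmem : x ∈ Set.Ioo 0 (π/(1-g)) := by
      refine ⟨hx0, (lt_div_iff₀ hε).2 ?_⟩
      have h1 : 1 - g < π/x := by linarith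
      have := (lt_div_iff₀ hx0).1 h1
      nlinarith [this]
    have hsval : Real.sin ((1-g)*x/2) / ((1-g)*x/2) = Real.sin ((1-g)*x/2) / ((1-g)*x/2) := rfl
    have hQpos : 0 < 1 + g*x^2*(Real.sin ((1-g)*x/2) / ((1-g)*x/2))^2 := by
      have h1 : (0:ℝ) ≤ g*x^2*(Real.sin ((1-g)*x/2) / ((1-g)*x/2))^2 :=
        mul_nonneg (mul_nonneg (by linarith) (sq_nonneg x)) (sq_nonneg _)
      linarith
    have hDQ : 1+g^2-2*g*Real.cos ((1-g)*x)
        = (1-g)^2 * (1 + g*x^2*(Real.sin ((1-g)*x/2) / ((1-g)*x/2))^2) := by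
      rw [aux_D]
      have hx0' : x ≠ 0 := hx0.ne'
      have hε0 : (1-g) ≠ 0 := hε.ne'
      field_simp
      ring
    rw [show hgF g x = Set.indicator (Set.Ioo 0 (π/(1-g)))
      (fun x => (1-g)^2 * ((1 - g^2) / (4 * π * (1 + g^2 - 2*g*Real.cos ((1-g)*x)) ^ ((3:ℝ)/2)))) x
      from rfl, Set.indicator_of_mem hmem, hDQ,
      Real.mul_rpow (sq_nonneg _) hQpos.le, aux_pow32 hε.le]
    have hπ0 : π ≠ 0 := Real.pi_ne_zero
    have hQ32pos : (0:ℝ) < (1 + g*x^2*(Real.sin ((1-g)*x/2) / ((1-g)*x/2))^2) ^ ((3:ℝ)/2) :=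
      Real.rpow_pos_of_pos hQpos _
    have hε0 : (1-g) ≠ 0 := hε.ne'
    field_simp
    ring
  · -- x ≤ 0 : everything is 0
    have h1 : ∀ g : ℝ, hgF g x = 0 := by
      intro g
      apply Set.indicator_of_notMem
      intro hc
      exact hx0 hc.1
    have h2 : hgLim x = 0 := Set.indicator_of_notMem (by simpa using hx0) _
    rw [h2]
    exact tendsto_const_nhds.congr (fun g => (h1 g).symm)


/-- `lim_{g→1⁻} (1−g) h(g) = 1/(2π)`. -/
theorem hgAverage3_limit :
    Filter.Tendsto (fun g : ℝ => (1 - g) * hgAverage3 g)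
      (nhdsWithin 1 (Set.Iio 1)) (nhds (1 / (2*π))) := by
  have key := MeasureTheory.tendsto_integral_filter_of_dominated_convergence (μ := volume)
    hgBound (Eventually.of_forall (fun g => hgF_meas g)) hg_bound hgBound_integrable
    (Eventually.of_forall hg_lim)
  rw [hgLim_integral] at key
  refine Filter.Tendsto.congr' ?_ key
  filter_upwards [self_mem_nhdsWithin] with g (hg : g < 1)
  exact (stepA hg).symm
end

section
/- For every g ∈ [0,1), 2π h(g) = (1/(1−g)) ∫₀^∞ √( (1 + ((1−g)/(1+g))² v²) / (1+v²)³ ) dv, where h(κ) = ∫₀^π (1−κ²) / (4π (1+κ²−2κ cos θ)^{3/2}) dθ. -/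
open MeasureTheory Real Set

/-- For every `g ∈ [0,1)`,
`2π h(g) = (1/(1−g)) ∫₀^∞ √((1 + ((1−g)/(1+g))² v²)/(1+v²)³) dv`. -/
theorem hgAverage3_integral_formula (g : ℝ) (hg : g ∈ Set.Ico (0:ℝ) 1) :
    2 * π * hgAverage3 g =
      (1 / (1 - g)) *
        ∫ v in Set.Ioi (0:ℝ), Real.sqrt ((1 + ((1-g)/(1+g))^2 * v^2) / (1 + v^2)^3) := by
  obtain ⟨hg0, hg1⟩ := hg
  have h1g : (0:ℝ) < 1 - g := by linarith
  have h1g' : (0:ℝ) < 1 + g := by linarith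
  set a : ℝ := (1 - g) / (1 + g) with ha_def
  have ha : 0 < a := div_pos h1g h1g'
  set φ : ℝ → ℝ := fun v => 2 * Real.arctan (a * v) with hφ_def
  set φ' : ℝ → ℝ := fun v => 2 * (a * (1 / (1 + (a * v) ^ 2))) with hφ'_def
  have hmono : StrictMono φ := by
    intro x y hxy
    have := Real.arctan_strictMono (mul_lt_mul_of_pos_left hxy ha)
    simpa [hφ_def] using this
  -- image of (0,∞) under φ is (0,π)
  have himg : φ '' Set.Ioi (0:ℝ) = Set.Ioo (0:ℝ) π := by
    ext θ
    constructor
    · rintro ⟨v, hv, rfl⟩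
      have hv : 0 < v := hv
      have h0 : 0 < Real.arctan (a * v) := by
        have := Real.arctan_strictMono (show (0:ℝ) < a * v from mul_pos ha hv)
        simpa using this
      have h2 : Real.arctan (a * v) < π / 2 := Real.arctan_lt_pi_div_two _
      constructor
      · simp only [hφ_def]; linarith
      · simp only [hφ_def]; linarith
    · rintro ⟨h0, hπ⟩
      refine ⟨Real.tan (θ / 2) / a, ?_, ?_⟩
      · have : 0 < Real.tan (θ / 2) :=
          Real.tan_pos_of_pos_of_lt_pi_div_two (by linarith) (by linarith)
        exact div_pos this ha
      · have : a * (Real.tan (θ / 2) / a) = Real.tan (θ / 2) := by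
          field_simp
        simp only [hφ_def, this]
        rw [Real.arctan_tan (by linarith [Real.pi_pos]) (by linarith)]
        ring
  have hderiv : ∀ v ∈ Set.Ioi (0:ℝ),
      HasDerivWithinAt φ (φ' v) (Set.Ioi (0:ℝ)) v := by
    intro v _
    have h1 : HasDerivAt (fun v : ℝ => a * v) a v := by
      simpa using (hasDerivAt_id v).const_mul a
    have h2 : HasDerivAt (fun v : ℝ => Real.arctan (a * v))
        (1 / (1 + (a * v) ^ 2) * a) v := (Real.hasDerivAt_arctan (a * v)).comp v h1
    have h3 : HasDerivAt φ (φ' v) v := by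
      have := h2.const_mul 2
      simpa [hφ_def, hφ'_def, mul_comm, mul_assoc, mul_left_comm] using this
    exact h3.hasDerivWithinAt
  have hchange := MeasureTheory.integral_image_eq_integral_abs_deriv_smul
    measurableSet_Ioi hderiv hmono.injective.injOn
    (fun θ => (1 - g^2) / (4 * π * (1 + g^2 - 2*g*Real.cos θ) ^ ((3:ℝ)/2)))
  rw [himg] at hchange
  -- pointwise identity on (0,∞)
  have hpt : ∀ v : ℝ,
      |φ' v| • ((1 - g^2) / (4 * π * (1 + g^2 - 2*g*Real.cos (φ v)) ^ ((3:ℝ)/2)))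
        = (1 / (2 * π * (1 - g))) *
            Real.sqrt ((1 + a^2 * v^2) / (1 + v^2)^3) := by
    intro v
    have hx2 : (0:ℝ) < 1 + (a * v) ^ 2 := by positivity
    have hv2 : (0:ℝ) < 1 + v ^ 2 := by positivity
    have hπ : (0:ℝ) < π := Real.pi_pos
    -- compute the cosine
    have hcos : Real.cos (φ v) = 2 * (1 / (1 + (a*v)^2)) - 1 := by
      simp only [hφ_def]
      rw [Real.cos_two_mul, Real.cos_sq_arctan]
    have hbase : 1 + g^2 - 2*g*Real.cos (φ v)
        = (1 - g)^2 * (1 + v^2) / (1 + (a*v)^2) := by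
      rw [hcos, ha_def]
      field_simp
      ring
    have hB : (0:ℝ) < (1 - g)^2 * (1 + v^2) / (1 + (a*v)^2) := by positivity
    rw [hbase]
    set B : ℝ := (1 - g)^2 * (1 + v^2) / (1 + (a*v)^2) with hB_def
    have hL : (0:ℝ) ≤ |φ' v| * ((1 - g^2) / (4 * π * B ^ ((3:ℝ)/2))) := by
      have h1g2 : (0:ℝ) < 1 - g^2 := by nlinarith
      have : (0:ℝ) < B ^ ((3:ℝ)/2) := Real.rpow_pos_of_pos hB _
      positivity
    have hR : (0:ℝ) ≤ (1 / (2 * π * (1 - g))) *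
        Real.sqrt ((1 + a^2 * v^2) / (1 + v^2)^3) := by positivity
    have ht : (0:ℝ) < B ^ ((3:ℝ)/2) := Real.rpow_pos_of_pos hB _
    have e1 : (B ^ ((3:ℝ)/2))^2 = B^3 := by
      rw [← Real.rpow_natCast (B ^ ((3:ℝ)/2)) 2, ← Real.rpow_mul hB.le,
        ← Real.rpow_natCast B 3]
      norm_num
    have e2 : (Real.sqrt ((1 + a^2 * v^2) / (1 + v^2)^3))^2
        = (1 + a^2 * v^2) / (1 + v^2)^3 := Real.sq_sqrt (by positivity)
    have hsq : (|φ' v| * ((1 - g^2) / (4 * π * B ^ ((3:ℝ)/2))))^2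
        = ((1 / (2 * π * (1 - g))) *
            Real.sqrt ((1 + a^2 * v^2) / (1 + v^2)^3))^2 := by
      have e3 : φ' v = 2 * (a * (1 / (1 + (a * v) ^ 2))) := rfl
      rw [mul_pow, sq_abs, mul_pow (1 / (2 * π * (1 - g))), e2, e3]
      rw [div_pow, div_pow, mul_pow (4*π) (B ^ ((3:ℝ)/2)), e1, hB_def, ha_def]
      field_simp
      ring
    calc |φ' v| • ((1 - g^2) / (4 * π * B ^ ((3:ℝ)/2)))
        = Real.sqrt ((|φ' v| * ((1 - g^2) / (4 * π * B ^ ((3:ℝ)/2))))^2) := by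
          rw [Real.sqrt_sq hL]; rfl
      _ = Real.sqrt (((1 / (2 * π * (1 - g))) *
            Real.sqrt ((1 + a^2 * v^2) / (1 + v^2)^3))^2) := by rw [hsq]
      _ = (1 / (2 * π * (1 - g))) *
            Real.sqrt ((1 + a^2 * v^2) / (1 + v^2)^3) := Real.sqrt_sq hR
  have hπ : (0:ℝ) < π := Real.pi_pos
  unfold hgAverage3
  rw [hchange]
  have : ∀ v : ℝ, |φ' v| • ((1 - g^2) / (4 * π * (1 + g^2 - 2*g*Real.cos (φ v)) ^ ((3:ℝ)/2)))
      = (1 / (2 * π * (1 - g))) * Real.sqrt ((1 + ((1-g)/(1+g))^2 * v^2) / (1 + v^2)^3) := by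
    intro v
    rw [hpt v, ha_def]
  rw [MeasureTheory.setIntegral_congr_fun measurableSet_Ioi (fun v _ => this v)]
  rw [MeasureTheory.integral_const_mul, ← mul_assoc]
  congr 1
  field_simp
end

section
/- For all real numbers ω₁ > 0 and ω₂ > 0, ∫₀^∞ v² / ((1+v²)^{3/2} (ω₁² + ω₂² v²)^{1/2}) dv = ω₁² ∫₀^∞ dv / ((1+v²)^{1/2} (ω₁² + ω₂² v²)^{3/2}). -/
open MeasureTheory Real Set

lemma rpow32 (x : ℝ) (hx : 0 ≤ x) : (x^2) ^ ((3:ℝ)/2) = x^3 := by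
  rw [← Real.rpow_natCast x 2, ← Real.rpow_mul hx, ← Real.rpow_natCast x 3]
  norm_num

lemma rpow12 (x : ℝ) (hx : 0 ≤ x) : (x^2) ^ ((1:ℝ)/2) = x := by
  rw [← Real.rpow_natCast x 2, ← Real.rpow_mul hx]
  norm_num

/-- For all `ω₁ > 0` and `ω₂ > 0`,
`∫₀^∞ v²/((1+v²)^{3/2} (ω₁²+ω₂²v²)^{1/2}) dv = ω₁² ∫₀^∞ dv/((1+v²)^{1/2} (ω₁²+ω₂²v²)^{3/2})`. -/
theorem integral_by_parts_identity (ω₁ ω₂ : ℝ) (h₁ : 0 < ω₁) (h₂ : 0 < ω₂) :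
    ∫ v in Set.Ioi (0:ℝ),
        v^2 / ((1 + v^2) ^ ((3:ℝ)/2) * (ω₁^2 + ω₂^2 * v^2) ^ ((1:ℝ)/2)) =
      ω₁^2 * ∫ v in Set.Ioi (0:ℝ),
        1 / ((1 + v^2) ^ ((1:ℝ)/2) * (ω₁^2 + ω₂^2 * v^2) ^ ((3:ℝ)/2)) := by
  set c : ℝ := ω₁ / ω₂ with hc
  have hcpos : 0 < c := div_pos h₁ h₂
  set g : ℝ → ℝ := fun v => v^2 / ((1 + v^2) ^ ((3:ℝ)/2) * (ω₁^2 + ω₂^2 * v^2) ^ ((1:ℝ)/2)) with hg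
  -- image of Ioi 0 under w ↦ c / w
  have himg : (fun w : ℝ => c / w) '' (Set.Ioi 0) = Set.Ioi (0:ℝ) := by
    ext y
    constructor
    · rintro ⟨w, hw, rfl⟩
      exact div_pos hcpos hw
    · intro hy
      exact ⟨c / y, div_pos hcpos hy, by field_simp⟩
  have hderiv : ∀ w ∈ Set.Ioi (0:ℝ),
      HasDerivWithinAt (fun w : ℝ => c / w) (-(c / w^2)) (Set.Ioi 0) w := by
    intro w hw
    have hw0 : w ≠ 0 := ne_of_gt hw
    have h0 : HasDerivAt (fun y : ℝ => c * y⁻¹) (c * -(w^2)⁻¹) w :=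
      (hasDerivAt_inv hw0).const_mul c
    have h2 : HasDerivAt (fun w : ℝ => c / w) (-(c / w^2)) w := by
      simpa [div_eq_mul_inv, mul_neg] using h0
    exact h2.hasDerivWithinAt
  have hinj : Set.InjOn (fun w : ℝ => c / w) (Set.Ioi 0) := by
    intro a ha b hb hab
    simp only at hab
    have ha' : a ≠ 0 := ne_of_gt ha
    have hb' : b ≠ 0 := ne_of_gt hb
    field_simp at hab
    exact hab.symm
  have key := MeasureTheory.integral_image_eq_integral_abs_deriv_smul
    measurableSet_Ioi hderiv hinj g
  rw [himg] at key
  rw [show (∫ v in Set.Ioi (0:ℝ),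
        v^2 / ((1 + v^2) ^ ((3:ℝ)/2) * (ω₁^2 + ω₂^2 * v^2) ^ ((1:ℝ)/2))) = ∫ v in Set.Ioi (0:ℝ), g v from rfl, key]
  rw [← integral_const_mul]
  apply MeasureTheory.setIntegral_congr_fun measurableSet_Ioi
  intro w hw
  have hw0 : (0:ℝ) < w := hw
  have hwne : w ≠ 0 := ne_of_gt hw0
  simp only [smul_eq_mul, hg]
  have habs : |(-(c / w^2))| = c / w^2 := by
    rw [abs_neg, abs_of_pos (div_pos hcpos (by positivity))]
  rw [habs]
  -- rewrite the composed expressions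
  have e1 : 1 + (c/w)^2 = (ω₁^2 + ω₂^2 * w^2) / (ω₂^2 * w^2) := by
    rw [hc]; field_simp; ring
  have e2 : ω₁^2 + ω₂^2 * (c/w)^2 = (ω₁^2 * (1 + w^2)) / w^2 := by
    rw [hc]; field_simp; ring
  rw [e1, e2]
  have hden1 : (0:ℝ) ≤ ω₁^2 + ω₂^2 * w^2 := by positivity
  have hden2 : (0:ℝ) ≤ ω₁^2 * (1 + w^2) := by positivity
  rw [Real.div_rpow hden1 (by positivity), Real.div_rpow hden2 (by positivity)]
  have e3 : (ω₂^2 * w^2) ^ ((3:ℝ)/2) = (ω₂ * w)^3 := by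
    rw [show ω₂^2 * w^2 = (ω₂ * w)^2 by ring, rpow32 _ (by positivity)]
  have e4 : (w^2) ^ ((1:ℝ)/2) = w := rpow12 w hw0.le
  have e5 : (ω₁^2 * (1 + w^2)) ^ ((1:ℝ)/2) = ω₁ * (1 + w^2) ^ ((1:ℝ)/2) := by
    rw [Real.mul_rpow (by positivity) (by positivity), rpow12 _ h₁.le]
  rw [e3, e4, e5]
  have hA : (0:ℝ) < (1 + w^2) ^ ((1:ℝ)/2) := Real.rpow_pos_of_pos (by positivity) _
  have hB : (0:ℝ) < (ω₁^2 + ω₂^2 * w^2) ^ ((3:ℝ)/2) := Real.rpow_pos_of_pos (by positivity) _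
  rw [hc]
  field_simp
end

section
/- Let n ≥ 3 be an integer, let D > 0, let v' ∈ ℝⁿ be a unit vector, and let w ∈ ℝⁿ with |w| ≤ 2D and w_⊥ := w − (w·v')v' ≠ 0. Then ∫_{−2D}^{2D} dλ / |w − λ v'|^{n−1} ≤ 2^{(n+1)/2} / ((n−2) |w_⊥|^{n−2}). -/
open MeasureTheory Real Set RealInnerProductSpace

/-- For `n ≥ 3`, `D > 0`, a unit vector `v' ∈ ℝⁿ` and `w ∈ ℝⁿ` with `|w| ≤ 2D` and
`w_⊥ := w − (w·v')v' ≠ 0`, one has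
`∫_{−2D}^{2D} dλ/|w − λ v'|^{n−1} ≤ 2^{(n+1)/2}/((n−2)|w_⊥|^{n−2})`. -/
theorem integral_inv_norm_pow_le {n : ℕ} (hn : 3 ≤ n) (D : ℝ) (hD : 0 < D)
    (v' w : EuclideanSpace ℝ (Fin n)) (hv' : ‖v'‖ = 1) (hw : ‖w‖ ≤ 2 * D)
    (hwp : w - ⟪w, v'⟫ • v' ≠ 0) :
    ∫⁻ t in Set.Ioo (-(2*D)) (2*D), ENNReal.ofReal (1 / ‖w - t • v'‖ ^ (n-1)) ≤
      ENNReal.ofReal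
        ((2:ℝ) ^ (((n:ℝ)+1)/2) / (((n:ℝ)-2) * ‖w - ⟪w, v'⟫ • v'‖ ^ (n-2))) := by
  set a : ℝ := ⟪w, v'⟫ with ha
  set r : ℝ := ‖w - a • v'‖ with hrdef
  have hr : 0 < r := by rw [hrdef]; exact norm_pos_iff.mpr hwp
  have hn1 : ((n:ℝ) - 1) = ((n - 1 : ℕ) : ℝ) := by
    have h1 : (1:ℕ) ≤ n := by omega
    rw [Nat.cast_sub h1]; norm_num
  have hn2 : ((n:ℝ) - 2) = ((n - 2 : ℕ) : ℝ) := by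
    have h2 : (2:ℕ) ≤ n := by omega
    rw [Nat.cast_sub h2]; norm_num
  have hn3 : (3:ℝ) ≤ (n:ℝ) := by exact_mod_cast hn
  set p : ℝ := -((n:ℝ) - 1) with hpdef
  have hp : p < -1 := by rw [hpdef]; linarith
  set c : ℝ := Real.sqrt 2 ^ (n - 1) with hcdef
  have hc : 0 < c := pow_pos (Real.sqrt_pos.mpr two_pos) _
  set K : ℝ → ℝ := fun s => (r + |s|) ^ p with hK
  -- pointwise bound
  have hpt : ∀ t : ℝ, 1 / ‖w - t • v'‖ ^ (n-1) ≤ c * K (t - a) := by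
    intro t
    have hortho : ⟪w - a • v', v'⟫ = 0 := by
      have h1 : ⟪w - a • v', v'⟫ = ⟪w, v'⟫ - a * (‖v'‖^2) := by
        rw [inner_sub_left, real_inner_smul_left, real_inner_self_eq_norm_sq]
      rw [h1, hv', ← ha]; ring
    have hdecomp : w - t • v' = (w - a • v') + (a - t) • v' := by module
    have hnorm : ‖w - t • v'‖ ^ 2 = r ^ 2 + (t - a) ^ 2 := by
      have h1 : ‖(a - t) • v'‖ ^ 2 = (t - a) ^ 2 := by
        rw [norm_smul, hv', mul_one, Real.norm_eq_abs, sq_abs]; ring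
      rw [hdecomp, norm_add_sq_real, real_inner_smul_right, hortho, h1, ← hrdef]
      ring
    have hnn : 0 ≤ r + |t - a| := by positivity
    have hwt : 0 < ‖w - t • v'‖ := by
      have h2 : 0 < ‖w - t • v'‖ ^ 2 := by rw [hnorm]; positivity
      have h3 := norm_nonneg (w - t • v')
      nlinarith
    have hsq : (r + |t - a|) ^ 2 ≤ 2 * ‖w - t • v'‖ ^ 2 := by
      rw [hnorm]
      nlinarith [sq_nonneg (r - |t - a|), sq_abs (t - a)]
    have hle : r + |t - a| ≤ Real.sqrt 2 * ‖w - t • v'‖ := by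
      have h2 : Real.sqrt ((r + |t - a|) ^ 2) ≤ Real.sqrt (2 * ‖w - t • v'‖ ^ 2) :=
        Real.sqrt_le_sqrt hsq
      rwa [Real.sqrt_sq hnn, Real.sqrt_mul (by norm_num : (0:ℝ) ≤ 2),
        Real.sqrt_sq (norm_nonneg _)] at h2
    have hpow : (r + |t - a|) ^ (n-1) ≤ c * ‖w - t • v'‖ ^ (n-1) := by
      calc (r + |t - a|) ^ (n-1) ≤ (Real.sqrt 2 * ‖w - t • v'‖) ^ (n-1) :=
            pow_le_pow_left₀ hnn hle _
        _ = c * ‖w - t • v'‖ ^ (n-1) := by rw [mul_pow, hcdef]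
    have hrt : 0 < r + |t - a| := by positivity
    have hKval : K (t - a) = ((r + |t - a|) ^ (n-1) : ℝ)⁻¹ := by
      show (r + |t - a|) ^ p = _
      rw [hpdef, hn1, Real.rpow_neg hnn, Real.rpow_natCast]
    rw [hKval, ← div_eq_mul_inv]
    rw [div_le_div_iff₀ (pow_pos hwt _) (pow_pos hrt _)]
    calc 1 * (r + |t - a|) ^ (n-1) = (r + |t - a|) ^ (n-1) := one_mul _
      _ ≤ c * ‖w - t • v'‖ ^ (n-1) := hpow
  -- integrability of K
  have hmp : MeasurePreserving (fun x : ℝ => x + r) volume volume :=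
    measurePreserving_add_right volume r
  have hemb : MeasurableEmbedding (fun x : ℝ => x + r) :=
    (Homeomorph.addRight r).measurableEmbedding
  have hpre : (fun x : ℝ => x + r) ⁻¹' (Ioi r) = Ioi 0 := by
    rw [preimage_add_const_Ioi, sub_self]
  have hIoiF : IntegrableOn (fun u : ℝ => u ^ p) (Ioi r) :=
    integrableOn_Ioi_rpow_of_lt hp hr
  have h1 : IntegrableOn (fun x : ℝ => (x + r) ^ p) (Ioi 0) := by
    have h := (hmp.integrableOn_comp_preimage hemb).mpr hIoiF
    rw [hpre] at h
    exact h
  have h1' : IntegrableOn K (Ioi 0) := by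
    refine h1.congr_fun (fun s hs => ?_) measurableSet_Ioi
    simp only [hK, abs_of_pos (mem_Ioi.mp hs), add_comm]
  have h2 : IntegrableOn K (Iic 0) := by
    have hmpn : MeasurePreserving (fun x : ℝ => -x) volume volume :=
      Measure.measurePreserving_neg (volume : Measure ℝ)
    have hembn : MeasurableEmbedding (fun x : ℝ => -x) :=
      (Homeomorph.neg ℝ).measurableEmbedding
    have hIci : IntegrableOn K (Ici 0) := Iff.mpr integrableOn_Ici_iff_integrableOn_Ioi h1'
    have h3 := (hmpn.integrableOn_comp_preimage hembn).mpr hIci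
    have hpre2 : (fun x : ℝ => -x) ⁻¹' (Ici 0) = Iic 0 := by
      ext x; simp [neg_nonneg]
    rw [hpre2] at h3
    have hcomp : K ∘ (fun x : ℝ => -x) = K := by
      funext x; simp [hK, abs_neg]
    rwa [hcomp] at h3
  have hKint : Integrable K := by
    rw [← integrableOn_univ, ← Iic_union_Ioi (a := (0:ℝ))]
    exact h2.union h1'
  have hGint : Integrable (fun t => c * K (t - a)) :=
    (hKint.comp_sub_right a).const_mul c
  have hGnn : 0 ≤ᵐ[volume] fun t => c * K (t - a) :=
    Filter.Eventually.of_forall fun t =>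
      mul_nonneg hc.le (Real.rpow_nonneg (by positivity) p)
  -- value of the integral
  have hIoi0 : ∫ x in Ioi (0:ℝ), (x + r) ^ p = -r ^ (p+1) / (p+1) := by
    have h := hmp.setIntegral_preimage_emb hemb (fun u : ℝ => u ^ p) (Ioi r)
    rw [hpre] at h
    rw [h, integral_Ioi_rpow_of_lt hp hr]
  have hKval2 : ∫ s, K s = 2 * (-r ^ (p+1) / (p+1)) := by
    have habs : ∫ s, K s = 2 * ∫ x in Ioi (0:ℝ), (r + x) ^ p :=
      integral_comp_abs (f := fun x : ℝ => (r + x) ^ p)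
    have hcomm : (∫ x in Ioi (0:ℝ), (r + x) ^ p) = ∫ x in Ioi (0:ℝ), (x + r) ^ p := by
      congr 1; funext x; rw [add_comm]
    rw [habs, hcomm, hIoi0]
  have hGval : ∫ t, c * K (t - a) = c * (2 * (-r ^ (p+1) / (p+1))) := by
    rw [integral_const_mul, integral_sub_right_eq_self K a, hKval2]
  -- the final real-number computation
  have hp1 : p + 1 = -((n:ℝ) - 2) := by rw [hpdef]; ring
  have hrp : r ^ (p+1) = (r ^ (n - 2 : ℕ))⁻¹ := by
    rw [hp1, hn2, Real.rpow_neg hr.le, Real.rpow_natCast]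
  have hcrpow : c = (2:ℝ) ^ (((n:ℝ)-1)/2) := by
    rw [hcdef, Real.sqrt_eq_rpow, ← Real.rpow_natCast ((2:ℝ) ^ ((1:ℝ)/2)) (n-1),
      ← Real.rpow_mul (by norm_num : (0:ℝ) ≤ 2), ← hn1]
    congr 1
    ring
  have h2c : 2 * c = (2:ℝ) ^ (((n:ℝ)+1)/2) := by
    rw [hcrpow, show ((n:ℝ)+1)/2 = 1 + ((n:ℝ)-1)/2 by ring, Real.rpow_add two_pos,
      Real.rpow_one]
  have hne : ((n:ℝ) - 2) ≠ 0 := by linarith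
  have hrne : (r ^ (n - 2 : ℕ)) ≠ 0 := pow_ne_zero _ hr.ne'
  have hfinal : c * (2 * (-r ^ (p+1) / (p+1))) =
      (2:ℝ) ^ (((n:ℝ)+1)/2) / (((n:ℝ)-2) * r ^ (n-2)) := by
    rw [hrp, hp1, neg_div_neg_eq, ← h2c]
    field_simp
  calc ∫⁻ t in Set.Ioo (-(2*D)) (2*D), ENNReal.ofReal (1 / ‖w - t • v'‖ ^ (n-1))
      ≤ ∫⁻ t in Set.Ioo (-(2*D)) (2*D), ENNReal.ofReal (c * K (t - a)) :=
        lintegral_mono fun t => ENNReal.ofReal_le_ofReal (hpt t)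
    _ ≤ ∫⁻ t, ENNReal.ofReal (c * K (t - a)) := setLIntegral_le_lintegral _ _
    _ = ENNReal.ofReal (∫ t, c * K (t - a)) :=
        (ofReal_integral_eq_lintegral_ofReal hGint hGnn).symm
    _ = ENNReal.ofReal ((2:ℝ) ^ (((n:ℝ)+1)/2) / (((n:ℝ)-2) * r ^ (n-2))) := by
        rw [hGval, hfinal]
end

section
/- Let X be a bounded open subset of ℝ². There exist constants C > 0 and C' > 0 (depending only on X) such that for all z₀, z ∈ X with z₀ ≠ z, ∫_X dz₁ / ( |z₀−z₁| |z₁−z| ) ≤ C − C' ln |z₀−z|. -/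
open MeasureTheory Real Set

open Metric Measure
open scoped ENNReal NNReal

local notation "dim" => Module.finrank ℝ

lemma lintegral_radial {E : Type*} [NormedAddCommGroup E] [NormedSpace ℝ E]
    [MeasurableSpace E] [BorelSpace E] [Nontrivial E] [FiniteDimensional ℝ E]
    (μ : Measure E) [μ.IsAddHaarMeasure] (f : ℝ → ℝ≥0∞) (hf : Measurable f) :
    ∫⁻ x, f ‖x‖ ∂μ = (dim E : ℝ≥0∞) * μ (ball 0 1) *
      ∫⁻ y in Ioi (0:ℝ), ENNReal.ofReal (y ^ (dim E - 1)) * f y := calc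
  ∫⁻ x, f ‖x‖ ∂μ = ∫⁻ x : ({(0:E)}ᶜ : Set E), f ‖x.1‖ ∂(μ.comap (↑)) := by
    rw [lintegral_subtype_comap (measurableSet_singleton _).compl fun x ↦ f ‖x‖,
      restrict_compl_singleton]
  _ = ∫⁻ x : sphere (0:E) 1 × Ioi (0:ℝ), f x.2 ∂μ.toSphere.prod (.volumeIoiPow (dim E - 1)) :=
    by simpa using (μ.measurePreserving_homeomorphUnitSphereProd.lintegral_comp
      ((hf.comp measurable_subtype_coe).comp measurable_snd))
  _ = μ.toSphere univ * ∫⁻ x : Ioi (0:ℝ), f x ∂(Measure.volumeIoiPow (dim E - 1)) := by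
    rw [← smul_eq_mul, ← lintegral_smul_measure, ← Measure.map_snd_prod]
    exact (lintegral_map (hf.comp measurable_subtype_coe) measurable_snd).symm
  _ = (dim E : ℝ≥0∞) * μ (ball 0 1) *
      ∫⁻ y in Ioi (0:ℝ), ENNReal.ofReal (y ^ (dim E - 1)) * f y := by
    rw [μ.toSphere_apply_univ]
    congr 1
    calc ∫⁻ x : Ioi (0:ℝ), f x ∂(Measure.volumeIoiPow (dim E - 1))
        = ∫⁻ x : Ioi (0:ℝ), ENNReal.ofReal (x.1 ^ (dim E - 1)) * f x
            ∂(Measure.comap Subtype.val volume) :=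
          lintegral_withDensity_eq_lintegral_mul _
            (by exact (measurable_subtype_coe.pow_const _).ennreal_ofReal)
            (hf.comp measurable_subtype_coe)
      _ = ∫⁻ y in Ioi (0:ℝ), ENNReal.ofReal (y ^ (dim E - 1)) * f y :=
          lintegral_subtype_comap measurableSet_Ioi
            (fun y => ENNReal.ofReal (y ^ (dim E - 1)) * f y)

lemma lintegral_Icc_one_div {r R : ℝ} (hr : 0 < r) (hrR : r ≤ R) :
    ∫⁻ y in Icc r R, ENNReal.ofReal (1/y) = ENNReal.ofReal (Real.log R - Real.log r) := by
  have hR : 0 < R := hr.trans_le hrR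
  have hcont : ContinuousOn (fun y : ℝ => 1/y) (Icc r R) := by
    apply ContinuousOn.div continuousOn_const continuousOn_id
    intro x hx; exact (hr.trans_le hx.1).ne'
  have hint : IntegrableOn (fun y : ℝ => 1/y) (Ioc r R) :=
    (hcont.integrableOn_Icc).mono_set Ioc_subset_Icc_self
  rw [Measure.restrict_congr_set Ioc_ae_eq_Icc.symm,
    ← ofReal_integral_eq_lintegral_ofReal hint]
  · rw [← intervalIntegral.integral_of_le hrR, integral_one_div (by
      intro h; rw [Set.uIcc_of_le hrR] at h; exact absurd h.1 (not_le.2 hr)),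
      Real.log_div hR.ne' hr.ne']
  · filter_upwards [ae_restrict_mem measurableSet_Ioc] with y hy
    exact div_nonneg zero_le_one (hr.trans hy.1).le

lemma near_radial {c r : ℝ} (hc : 0 ≤ c) (hr : 0 < r) :
    ∫⁻ y in Ioi (0:ℝ), ENNReal.ofReal (y ^ 1) *
      (if y < r then ENNReal.ofReal (c * (1/y)) else 0) = ENNReal.ofReal (c * r) := by
  have : ∀ y ∈ Ioi (0:ℝ), ENNReal.ofReal (y ^ 1) *
      (if y < r then ENNReal.ofReal (c * (1/y)) else 0)
      = (Iio r).indicator (fun _ => ENNReal.ofReal c) y := by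
    intro y hy
    rw [mem_Ioi] at hy
    by_cases h : y < r
    · rw [if_pos h, indicator_of_mem (mem_Iio.2 h), ← ENNReal.ofReal_mul (by positivity)]
      congr 1
      field_simp
    · rw [if_neg h, indicator_of_notMem (by simpa using h), mul_zero]
  rw [setLIntegral_congr_fun measurableSet_Ioi this,
    lintegral_indicator measurableSet_Iio _, setLIntegral_const,
    Measure.restrict_apply measurableSet_Iio]
  rw [show Iio r ∩ Ioi (0:ℝ) = Ioo 0 r by ext x; simp [mem_Ioo, and_comm],
    Real.volume_Ioo, ← ENNReal.ofReal_mul hc, sub_zero]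

lemma far_radial {c r R : ℝ} (hc : 0 ≤ c) (hr : 0 < r) (hrR : r ≤ R) :
    ∫⁻ y in Ioi (0:ℝ), ENNReal.ofReal (y ^ 1) *
      (if r ≤ y ∧ y ≤ R then ENNReal.ofReal (c * (1/y^2)) else 0)
      = ENNReal.ofReal c * ENNReal.ofReal (Real.log R - Real.log r) := by
  have : ∀ y ∈ Ioi (0:ℝ), ENNReal.ofReal (y ^ 1) *
      (if r ≤ y ∧ y ≤ R then ENNReal.ofReal (c * (1/y^2)) else 0)
      = (Icc r R).indicator (fun y => ENNReal.ofReal c * ENNReal.ofReal (1/y)) y := by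
    intro y hy
    rw [mem_Ioi] at hy
    by_cases h : r ≤ y ∧ y ≤ R
    · rw [if_pos h, indicator_of_mem (mem_Icc.2 h), ← ENNReal.ofReal_mul hc,
        ← ENNReal.ofReal_mul (by positivity)]
      congr 1
      field_simp
    · rw [if_neg h, indicator_of_notMem (by simpa using h), mul_zero]
  rw [setLIntegral_congr_fun measurableSet_Ioi this,
    lintegral_indicator measurableSet_Icc _, Measure.restrict_restrict measurableSet_Icc,
    show Icc r R ∩ Ioi (0:ℝ) = Icc r R from
      inter_eq_left.2 (fun x hx => lt_of_lt_of_le hr hx.1),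
    lintegral_const_mul _ (by exact (measurable_const.div measurable_id).ennreal_ofReal),
    lintegral_Icc_one_div hr hrR]

lemma pointwise_bound {a b d R : ℝ} (hd : 0 < d) (hab : d ≤ a + b)
    (ha0 : 0 ≤ a) (hb0 : 0 ≤ b) (haR : a ≤ R) (hbR : b ≤ R) :
    ENNReal.ofReal (1/(a*b)) ≤
      ((if a < d/2 then ENNReal.ofReal (2/d * (1/a)) else 0)
        + (if b < d/2 then ENNReal.ofReal (2/d * (1/b)) else 0))
      + ((if d/2 ≤ a ∧ a ≤ R then ENNReal.ofReal (1/2 * (1/a^2)) else 0)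
        + (if d/2 ≤ b ∧ b ≤ R then ENNReal.ofReal (1/2 * (1/b^2)) else 0)) := by
  rcases eq_or_lt_of_le ha0 with ha | ha
  · simp [← ha]
  rcases eq_or_lt_of_le hb0 with hb | hb
  · simp [← hb]
  by_cases hA : a < d/2
  · -- then b ≥ d/2
    have hbd : d/2 ≤ b := by linarith
    have key : 1/(a*b) ≤ 2/d * (1/a) := by
      rw [div_mul_div_comm, div_le_div_iff₀ (by positivity) (by positivity)]
      nlinarith
    refine le_add_right (le_add_right ?_)
    rw [if_pos hA]
    exact ENNReal.ofReal_le_ofReal key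
  by_cases hB : b < d/2
  · have had : d/2 ≤ a := le_of_not_gt hA
    have key : 1/(a*b) ≤ 2/d * (1/b) := by
      rw [div_mul_div_comm, div_le_div_iff₀ (by positivity) (by positivity)]
      nlinarith
    refine le_add_right (le_add_left ?_)
    rw [if_pos hB]
    exact ENNReal.ofReal_le_ofReal key
  · have had : d/2 ≤ a := le_of_not_gt hA
    have hbd : d/2 ≤ b := le_of_not_gt hB
    have key : 1/(a*b) ≤ 1/2 * (1/a^2) + 1/2 * (1/b^2) := by
      have heq : 1/2 * (1/a^2) + 1/2 * (1/b^2) - 1/(a*b) = (a - b)^2/(2*a^2*b^2) := by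
        field_simp
        ring
      nlinarith [sq_nonneg (a - b), div_nonneg (sq_nonneg (a-b)) (by positivity : (0:ℝ) ≤ 2*a^2*b^2)]
    refine le_add_left ?_
    rw [if_pos ⟨had, haR⟩, if_pos ⟨hbd, hbR⟩,
      ← ENNReal.ofReal_add (by positivity) (by positivity)]
    exact ENNReal.ofReal_le_ofReal key


/-- For a bounded open `X ⊂ ℝ²` there exist constants `C > 0`, `C' > 0` such that for all
`z₀ ≠ z` in `X`, `∫_X dz₁/(|z₀−z₁| |z₁−z|) ≤ C − C' ln|z₀−z|`. -/
theorem double_singular_integral_log_bound (X : Set (EuclideanSpace ℝ (Fin 2)))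
    (hXo : IsOpen X) (hXb : Bornology.IsBounded X) :
    ∃ C > (0:ℝ), ∃ C' > (0:ℝ), ∀ z₀ ∈ X, ∀ z ∈ X, z₀ ≠ z →
      ∫⁻ z₁ in X, ENNReal.ofReal (1 / (‖z₀ - z₁‖ * ‖z₁ - z‖)) ≤
        ENNReal.ofReal (C - C' * Real.log ‖z₀ - z‖) := by
  obtain ⟨R₀, hR₀⟩ := Metric.isBounded_iff.1 hXb
  set R : ℝ := max 1 R₀ with hRdef
  have hR1 : (1:ℝ) ≤ R := le_max_left _ _
  have hR0 : (0:ℝ) < R := lt_of_lt_of_le one_pos hR1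
  have hXR : ∀ a ∈ X, ∀ b ∈ X, ‖a - b‖ ≤ R := fun a ha b hb => by
    rw [← dist_eq_norm]; exact (hR₀ ha hb).trans (le_max_right _ _)
  set K : ℝ := (volume (ball (0 : EuclideanSpace ℝ (Fin 2)) 1)).toReal with hKdef
  have hκtop : volume (ball (0 : EuclideanSpace ℝ (Fin 2)) 1) ≠ ⊤ := measure_ball_lt_top.ne
  have hκ0 : volume (ball (0 : EuclideanSpace ℝ (Fin 2)) 1) ≠ 0 :=
    (measure_ball_pos _ _ one_pos).ne'
  have hK : 0 < K := ENNReal.toReal_pos hκ0 hκtop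
  have hκK : volume (ball (0 : EuclideanSpace ℝ (Fin 2)) 1) = ENNReal.ofReal K :=
    (ENNReal.ofReal_toReal hκtop).symm
  have hlog2 : 0 < Real.log 2 := Real.log_pos one_lt_two
  have hlogR : 0 ≤ Real.log R := Real.log_nonneg hR1
  have h2half : (2:ℝ≥0∞) * ENNReal.ofReal (1/2) = 1 := by
    rw [show ((2:ℝ≥0∞)) = ENNReal.ofReal 2 from by norm_num,
      ← ENNReal.ofReal_mul (by norm_num)]
    norm_num
  refine ⟨4*K + 2*K*(Real.log 2 + Real.log R), by nlinarith, 2*K, by positivity, ?_⟩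
  intro z₀ hz₀ z hz hne
  set d : ℝ := ‖z₀ - z‖ with hddef
  have hd : 0 < d := by
    rw [hddef]; exact norm_pos_iff.2 (sub_ne_zero.2 hne)
  have hdR : d ≤ R := hXR _ hz₀ _ hz
  have hd2R : d/2 ≤ R := by linarith
  set L : ℝ := Real.log R - Real.log (d/2) with hLdef
  have hL : 0 ≤ L := by
    rw [hLdef]; have := Real.log_le_log (by positivity : (0:ℝ) < d/2) hd2R; linarith
  have hdim : Module.finrank ℝ (EuclideanSpace ℝ (Fin 2)) = 2 := finrank_euclideanSpace_fin
  -- measurability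
  have hmg₁ : Measurable (fun y : ℝ => if y < d/2 then ENNReal.ofReal (2/d * (1/y)) else 0) :=
    Measurable.ite measurableSet_Iio
      (((measurable_const.div measurable_id).const_mul _).ennreal_ofReal) measurable_const
  have hmg₂ : Measurable (fun y : ℝ =>
      if d/2 ≤ y ∧ y ≤ R then ENNReal.ofReal (1/2 * (1/y^2)) else 0) :=
    Measurable.ite (by exact measurableSet_Icc)
      (((measurable_const.div (measurable_id.pow_const 2)).const_mul _).ennreal_ofReal)
      measurable_const
  have hn₁ : Measurable (fun z₁ : EuclideanSpace ℝ (Fin 2) => ‖z₀ - z₁‖) :=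
    (measurable_const.sub measurable_id).norm
  have hn₂ : Measurable (fun z₁ : EuclideanSpace ℝ (Fin 2) => ‖z₁ - z‖) :=
    (measurable_id.sub measurable_const).norm
  have m1 : Measurable (fun z₁ : EuclideanSpace ℝ (Fin 2) =>
      if ‖z₀ - z₁‖ < d/2 then ENNReal.ofReal (2/d * (1/‖z₀ - z₁‖)) else 0) := hmg₁.comp hn₁
  have m2 : Measurable (fun z₁ : EuclideanSpace ℝ (Fin 2) =>
      if ‖z₁ - z‖ < d/2 then ENNReal.ofReal (2/d * (1/‖z₁ - z‖)) else 0) := hmg₁.comp hn₂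
  have m3 : Measurable (fun z₁ : EuclideanSpace ℝ (Fin 2) =>
      if d/2 ≤ ‖z₀ - z₁‖ ∧ ‖z₀ - z₁‖ ≤ R then ENNReal.ofReal (1/2 * (1/‖z₀ - z₁‖^2)) else 0) :=
    hmg₂.comp hn₁
  have m12 : Measurable (fun z₁ : EuclideanSpace ℝ (Fin 2) =>
      (if ‖z₀ - z₁‖ < d/2 then ENNReal.ofReal (2/d * (1/‖z₀ - z₁‖)) else 0)
      + (if ‖z₁ - z‖ < d/2 then ENNReal.ofReal (2/d * (1/‖z₁ - z‖)) else 0)) := m1.add m2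
  -- global radial integrals
  have J₁ : ∫⁻ w : EuclideanSpace ℝ (Fin 2),
      (fun y : ℝ => if y < d/2 then ENNReal.ofReal (2/d * (1/y)) else 0) ‖w‖
      = ENNReal.ofReal (2*K) := by
    rw [lintegral_radial volume _ hmg₁, hdim]
    norm_num only
    rw [near_radial (by positivity) (by positivity : (0:ℝ) < d/2),
      show (2/d) * (d/2) = 1 by field_simp, ENNReal.ofReal_one, mul_one, hκK,
      two_mul, ← ENNReal.ofReal_add hK.le hK.le, ← two_mul]
  have J₂ : ∫⁻ w : EuclideanSpace ℝ (Fin 2),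
      (fun y : ℝ => if d/2 ≤ y ∧ y ≤ R then ENNReal.ofReal (1/2 * (1/y^2)) else 0) ‖w‖
      = ENNReal.ofReal (K * L) := by
    rw [lintegral_radial volume _ hmg₂, hdim]
    norm_num only
    rw [far_radial (by norm_num : (0:ℝ) ≤ 1/2) (by positivity : (0:ℝ) < d/2) hd2R, hκK, hLdef]
    rw [show (2:ℝ≥0∞) * ENNReal.ofReal K
          * (ENNReal.ofReal (1/2) * ENNReal.ofReal (Real.log R - Real.log (d/2)))
        = ((2:ℝ≥0∞) * ENNReal.ofReal (1/2))
          * (ENNReal.ofReal K * ENNReal.ofReal (Real.log R - Real.log (d/2))) from by ring,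
      h2half, one_mul, ← ENNReal.ofReal_mul hK.le]
  -- translations
  have T₁ : ∫⁻ z₁ : EuclideanSpace ℝ (Fin 2),
      (if ‖z₀ - z₁‖ < d/2 then ENNReal.ofReal (2/d * (1/‖z₀ - z₁‖)) else 0)
      = ENNReal.ofReal (2*K) :=
    ((measurePreserving_sub_left volume z₀).lintegral_comp
      (hmg₁.comp measurable_norm)).trans J₁
  have T₂ : ∫⁻ z₁ : EuclideanSpace ℝ (Fin 2),
      (if ‖z₁ - z‖ < d/2 then ENNReal.ofReal (2/d * (1/‖z₁ - z‖)) else 0)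
      = ENNReal.ofReal (2*K) :=
    ((measurePreserving_sub_right volume z).lintegral_comp
      (hmg₁.comp measurable_norm)).trans J₁
  have T₃ : ∫⁻ z₁ : EuclideanSpace ℝ (Fin 2),
      (if d/2 ≤ ‖z₀ - z₁‖ ∧ ‖z₀ - z₁‖ ≤ R then ENNReal.ofReal (1/2 * (1/‖z₀ - z₁‖^2)) else 0)
      = ENNReal.ofReal (K * L) :=
    ((measurePreserving_sub_left volume z₀).lintegral_comp
      (hmg₂.comp measurable_norm)).trans J₂
  have T₄ : ∫⁻ z₁ : EuclideanSpace ℝ (Fin 2),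
      (if d/2 ≤ ‖z₁ - z‖ ∧ ‖z₁ - z‖ ≤ R then ENNReal.ofReal (1/2 * (1/‖z₁ - z‖^2)) else 0)
      = ENNReal.ofReal (K * L) :=
    ((measurePreserving_sub_right volume z).lintegral_comp
      (hmg₂.comp measurable_norm)).trans J₂
  calc ∫⁻ z₁ in X, ENNReal.ofReal (1 / (‖z₀ - z₁‖ * ‖z₁ - z‖))
      ≤ ∫⁻ z₁ in X,
        (((if ‖z₀ - z₁‖ < d/2 then ENNReal.ofReal (2/d * (1/‖z₀ - z₁‖)) else 0)
          + (if ‖z₁ - z‖ < d/2 then ENNReal.ofReal (2/d * (1/‖z₁ - z‖)) else 0))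
        + ((if d/2 ≤ ‖z₀ - z₁‖ ∧ ‖z₀ - z₁‖ ≤ R then ENNReal.ofReal (1/2 * (1/‖z₀ - z₁‖^2)) else 0)
          + (if d/2 ≤ ‖z₁ - z‖ ∧ ‖z₁ - z‖ ≤ R then ENNReal.ofReal (1/2 * (1/‖z₁ - z‖^2)) else 0))) := by
        refine lintegral_mono_ae ((ae_restrict_iff' hXo.measurableSet).2
          (ae_of_all _ fun z₁ hz₁ => ?_))
        refine pointwise_bound hd ?_ (norm_nonneg _) (norm_nonneg _)
          (hXR _ hz₀ _ hz₁) (hXR _ hz₁ _ hz)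
        have := norm_add_le (z₀ - z₁) (z₁ - z)
        rw [hddef]
        simpa using this
    _ ≤ ∫⁻ z₁,
        (((if ‖z₀ - z₁‖ < d/2 then ENNReal.ofReal (2/d * (1/‖z₀ - z₁‖)) else 0)
          + (if ‖z₁ - z‖ < d/2 then ENNReal.ofReal (2/d * (1/‖z₁ - z‖)) else 0))
        + ((if d/2 ≤ ‖z₀ - z₁‖ ∧ ‖z₀ - z₁‖ ≤ R then ENNReal.ofReal (1/2 * (1/‖z₀ - z₁‖^2)) else 0)
          + (if d/2 ≤ ‖z₁ - z‖ ∧ ‖z₁ - z‖ ≤ R then ENNReal.ofReal (1/2 * (1/‖z₁ - z‖^2)) else 0))) :=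
        setLIntegral_le_lintegral _ _
    _ = ENNReal.ofReal (2*K) + ENNReal.ofReal (2*K)
        + (ENNReal.ofReal (K*L) + ENNReal.ofReal (K*L)) := by
        rw [lintegral_add_left m12, lintegral_add_left m1, lintegral_add_left m3, T₁, T₂, T₃, T₄]
    _ ≤ ENNReal.ofReal ((4*K + 2*K*(Real.log 2 + Real.log R)) - 2*K * Real.log d) := by
        rw [← ENNReal.ofReal_add (by positivity) (by positivity),
          ← ENNReal.ofReal_add (mul_nonneg hK.le hL) (mul_nonneg hK.le hL),
          ← ENNReal.ofReal_add (by positivity)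
            (add_nonneg (mul_nonneg hK.le hL) (mul_nonneg hK.le hL))]
        apply ENNReal.ofReal_le_ofReal
        rw [hLdef, Real.log_div hd.ne' two_ne_zero]
        exact le_of_eq (by ring)
end

section
/- Let n ≥ 3 be an integer and X ⊂ ℝⁿ a nonempty bounded convex open set. Let σ : ℝⁿ×S^{n−1} → ℝ and k : ℝⁿ×S^{n−1}×S^{n−1} → ℝ be bounded continuous functions, and set σ_a(x,v) := σ(x,v) − ∫_{S^{n−1}} k(x,v,v¹) dv¹. For distinct x₀, x₁ ∈ ℝⁿ define E(x₀,x₁) := exp( −∫₀^{|x₀−x₁|} σ( x₀ − s u, u ) ds ) with u = (x₀−x₁)/|x₀−x₁|, E(y,y) := 1, and E(x₀,x₁,x₂) := E(x₀,x₁)E(x₁,x₂). Let x' ∈ closure(X) and v' ∈ S^{n−1} be such that x' + s v' ∈ X for some s > 0, set τ := sup{ s > 0 : x' + s v' ∈ X }, let t₀ ∈ (0,τ), x := x' + t₀ v', and let w ∈ S^{n−1} with w·v' = 0. For ε > 0 define L(ε) := ∫₀^{τ} E( x + ε w, x' + t' v', x' ) σ_a( x + ε w, v_{t',ε} ) k(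 x' + t' v', v', v_{t',ε} ) ( (t'−t₀)² + ε² )^{−(n−1)/2} dt', where v_{t',ε} := ( (t₀−t') v' + ε w ) / √( (t₀−t')² + ε² ). Then ε^{n−2} L(ε) → E(x,x') ∫₀^π sin^{n−3} θ · σ_a( x, cos θ · v' + sin θ · w ) k( x, v', cos θ · v' + sin θ · w ) dθ as ε → 0⁺. -/
open MeasureTheory Real Set RealInnerProductSpace

/-- The attenuation factor `E(x₀,x₁) = exp(−∫₀^{|x₀−x₁|} σ(x₀ − s u, u) ds)` with
`u = (x₀−x₁)/|x₀−x₁|`; for `x₀ = x₁` the integral is empty so the value is `1`. -/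
noncomputable def attenuation {n : ℕ}
    (σ : EuclideanSpace ℝ (Fin n) → EuclideanSpace ℝ (Fin n) → ℝ)
    (x₀ x₁ : EuclideanSpace ℝ (Fin n)) : ℝ :=
  Real.exp (-(∫ s in (0:ℝ)..‖x₀ - x₁‖,
    σ (x₀ - s • (‖x₀ - x₁‖⁻¹ • (x₀ - x₁))) (‖x₀ - x₁‖⁻¹ • (x₀ - x₁))))

/-- The intrinsic attenuation `σ_a(x,v) = σ(x,v) − ∫_{S^{n−1}} k(x,v,v¹) dv¹`, the sphere
carrying its canonical surface measure. -/
noncomputable def sigmaA {n : ℕ}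
    (σ : EuclideanSpace ℝ (Fin n) → EuclideanSpace ℝ (Fin n) → ℝ)
    (k : EuclideanSpace ℝ (Fin n) → EuclideanSpace ℝ (Fin n) →
      EuclideanSpace ℝ (Fin n) → ℝ)
    (x v : EuclideanSpace ℝ (Fin n)) : ℝ :=
  σ x v - ∫ u : Metric.sphere (0 : EuclideanSpace ℝ (Fin n)) 1,
    k x v (u : EuclideanSpace ℝ (Fin n)) ∂((volume : Measure (EuclideanSpace ℝ (Fin n))).toSphere)

namespace SSAux

variable {n : ℕ}
local notation "E" => EuclideanSpace ℝ (Fin n)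

lemma unit_dir {x₀ x₁ : E} (h : x₀ ≠ x₁) : ‖‖x₀ - x₁‖⁻¹ • (x₀ - x₁)‖ = 1 := by
  have hd : x₀ - x₁ ≠ 0 := sub_ne_zero.mpr h
  rw [norm_smul, norm_inv, norm_norm, inv_mul_cancel₀ (norm_ne_zero_iff.mpr hd)]

lemma norm_comb {v' w : E} (hv' : ‖v'‖ = 1) (hw : ‖w‖ = 1) (hwv : ⟪w, v'⟫ = 0) (a b : ℝ) :
    ‖a • v' + b • w‖ = Real.sqrt (a^2 + b^2) := by
  have h2 : ‖a • v' + b • w‖^2 = a^2 + b^2 := by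
    rw [norm_add_sq_real, norm_smul, norm_smul, real_inner_smul_left, real_inner_smul_right,
      hv', hw, real_inner_comm, hwv]
    simp [mul_pow, sq_abs]
  rw [← h2, Real.sqrt_sq (norm_nonneg _)]

lemma att_integral_bound {σ : E → E → ℝ} {M : ℝ} (hσM : ∀ x v : E, ‖v‖ = 1 → |σ x v| ≤ M)
    (x₀ x₁ : E) :
    |∫ s in (0:ℝ)..‖x₀ - x₁‖,
      σ (x₀ - s • (‖x₀ - x₁‖⁻¹ • (x₀ - x₁))) (‖x₀ - x₁‖⁻¹ • (x₀ - x₁))| ≤ M * ‖x₀ - x₁‖ := by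
  by_cases h : x₀ = x₁
  · simp [h]
  · have := intervalIntegral.norm_integral_le_of_norm_le_const
      (a := (0:ℝ)) (b := ‖x₀ - x₁‖) (C := M)
      (f := fun s => σ (x₀ - s • (‖x₀ - x₁‖⁻¹ • (x₀ - x₁))) (‖x₀ - x₁‖⁻¹ • (x₀ - x₁)))
      (fun s _ => hσM _ _ (unit_dir h))
    simpa [abs_of_nonneg (norm_nonneg (x₀ - x₁)), mul_comm] using this

lemma tendsto_att_one {ι : Type*} {l : Filter ι} {σ : E → E → ℝ} {M : ℝ}
    (hσM : ∀ x v : E, ‖v‖ = 1 → |σ x v| ≤ M) {p q : ι → E} {z : E}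
    (hp : Filter.Tendsto p l (nhds z)) (hq : Filter.Tendsto q l (nhds z)) :
    Filter.Tendsto (fun i => attenuation σ (p i) (q i)) l (nhds 1) := by
  have hI : Filter.Tendsto (fun i => ∫ s in (0:ℝ)..‖p i - q i‖,
      σ (p i - s • (‖p i - q i‖⁻¹ • (p i - q i))) (‖p i - q i‖⁻¹ • (p i - q i))) l (nhds 0) := by
    apply squeeze_zero_norm (fun i => att_integral_bound hσM (p i) (q i))
    have : Filter.Tendsto (fun i => M * ‖p i - q i‖) l (nhds (M * ‖z - z‖)) :=
      (((hp.sub hq).norm).const_mul M)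
    simpa using this
  have := (Real.continuous_exp.tendsto 0).comp
    (by simpa using hI.neg : Filter.Tendsto (fun i => -(∫ s in (0:ℝ)..‖p i - q i‖,
      σ (p i - s • (‖p i - q i‖⁻¹ • (p i - q i))) (‖p i - q i‖⁻¹ • (p i - q i)))) l (nhds 0))
  simpa [attenuation, Function.comp_def] using this

lemma att2_eq {σ : E → E → ℝ} {x' v' : E} (hv' : ‖v'‖ = 1) {t' : ℝ} (ht' : 0 ≤ t') :
    attenuation σ (x' + t' • v') x' =
      Real.exp (-(∫ s in (0:ℝ)..t', σ (x' + (t' - s) • v') v')) := by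
  have hsub : x' + t' • v' - x' = t' • v' := by abel
  have hnorm : ‖x' + t' • v' - x'‖ = t' := by
    rw [hsub, norm_smul, hv', mul_one, Real.norm_eq_abs, abs_of_nonneg ht']
  rcases eq_or_lt_of_le ht' with h0 | h0
  · simp [attenuation, hnorm, ← h0]
  · have hdir : ‖x' + t' • v' - x'‖⁻¹ • (x' + t' • v' - x') = v' := by
      rw [hnorm, hsub, smul_smul, inv_mul_cancel₀ (ne_of_gt h0), one_smul]
    have hinv : ‖x' + t' • v' - x'‖⁻¹ = t'⁻¹ := by rw [hnorm]
    unfold attenuation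
    rw [hnorm]
    rw [hinv] at hdir
    congr 2
    apply intervalIntegral.integral_congr
    intro s _
    rw [hdir]
    show σ (x' + t' • v' - s • v') v' = _
    congr 1
    module

lemma continuous_G {σ : E → E → ℝ} (hσc : Continuous fun p : E × E => σ p.1 p.2)
    (x' v' : E) :
    Continuous fun t' : ℝ => ∫ s in (0:ℝ)..t', σ (x' + (t' - s) • v') v' := by
  exact intervalIntegral.continuous_parametric_intervalIntegral_of_continuous
    (f := fun (t' : ℝ) (s : ℝ) => σ (x' + (t' - s) • v') v')
    (by fun_prop) continuous_id

lemma continuous_att_param {σ : E → E → ℝ} (hσc : Continuous fun p : E × E => σ p.1 p.2)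
    (c : E) (g : ℝ → E) (hg : Continuous g) (hne : ∀ t, c ≠ g t) :
    Continuous fun t => attenuation σ c (g t) := by
  have hd : ∀ t, c - g t ≠ 0 := fun t => sub_ne_zero.mpr (hne t)
  have hN : Continuous fun t => ‖c - g t‖ := (continuous_const.sub hg).norm
  have hNne : ∀ t, ‖c - g t‖ ≠ 0 := fun t => norm_ne_zero_iff.mpr (hd t)
  have hu : Continuous fun t => ‖c - g t‖⁻¹ • (c - g t) :=
    (hN.inv₀ hNne).smul (continuous_const.sub hg)
  apply Real.continuous_exp.comp
  apply Continuous.neg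
  exact intervalIntegral.continuous_parametric_intervalIntegral_of_continuous
    (f := fun (t : ℝ) (s : ℝ) =>
      σ (c - s • (‖c - g t‖⁻¹ • (c - g t))) (‖c - g t‖⁻¹ • (c - g t)))
    (by
      rw [show Function.uncurry (fun (t s : ℝ) =>
        σ (c - s • ‖c - g t‖⁻¹ • (c - g t)) (‖c - g t‖⁻¹ • (c - g t))) =
        (fun p : _ × _ => σ p.1 p.2) ∘ (fun q : ℝ × ℝ =>
          (c - q.2 • ‖c - g q.1‖⁻¹ • (c - g q.1), ‖c - g q.1‖⁻¹ • (c - g q.1))) from rfl]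
      apply hσc.comp
      refine Continuous.prodMk ?_ ?_
      · exact continuous_const.sub ((continuous_snd).smul ((hu.comp continuous_fst)))
      · exact hu.comp continuous_fst) hN

lemma continuous_sphere_integral {k : E → E → E → ℝ}
    (hkc : Continuous fun p : E × E × E => k p.1 p.2.1 p.2.2) :
    Continuous fun p : E × E => ∫ u : Metric.sphere (0:E) 1, k p.1 p.2 u
      ∂((volume : Measure E).toSphere) := by
  rw [continuous_iff_continuousAt]
  intro p₀
  obtain ⟨C, hC⟩ : ∃ C, ∀ q ∈ (Metric.closedBall p₀.1 1 ×ˢ Metric.closedBall p₀.2 1) ×ˢ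
      (Metric.sphere (0:E) 1), |k q.1.1 q.1.2 q.2| ≤ C := by
    have hcomp : IsCompact ((Metric.closedBall p₀.1 1 ×ˢ Metric.closedBall p₀.2 1) ×ˢ
        (Metric.sphere (0:E) 1)) :=
      ((isCompact_closedBall _ _).prod (isCompact_closedBall _ _)).prod (isCompact_sphere _ _)
    obtain ⟨C, hC⟩ := hcomp.exists_bound_of_continuousOn
      (f := fun q : (E × E) × E => k q.1.1 q.1.2 q.2) (by fun_prop)
    exact ⟨C, fun q hq => by simpa using hC q hq⟩
  apply MeasureTheory.continuousAt_of_dominated (bound := fun _ => C)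
  · filter_upwards with p
    exact (Continuous.aestronglyMeasurable (by fun_prop))
  · have hmem : ∀ᶠ p : E × E in nhds p₀,
        p ∈ Metric.closedBall p₀.1 1 ×ˢ Metric.closedBall p₀.2 1 :=
      Filter.eventually_of_mem (prod_mem_nhds (Metric.closedBall_mem_nhds _ one_pos)
        (Metric.closedBall_mem_nhds _ one_pos)) (fun p hp => hp)
    filter_upwards [hmem] with p hp
    filter_upwards with u
    exact hC ((p.1, p.2), (u : E)) ⟨hp, u.2⟩
  · exact integrable_const _
  · filter_upwards with u
    exact (by fun_prop : Continuous fun p : E × E => k p.1 p.2 u).continuousAt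

lemma continuous_sigmaA {σ : E → E → ℝ} {k : E → E → E → ℝ}
    (hσc : Continuous fun p : E × E => σ p.1 p.2)
    (hkc : Continuous fun p : E × E × E => k p.1 p.2.1 p.2.2) :
    Continuous fun p : E × E => sigmaA σ k p.1 p.2 :=
  hσc.sub (continuous_sphere_integral hkc)

lemma sigmaA_bound {σ : E → E → ℝ} {k : E → E → E → ℝ} {M : ℝ}
    (hσM : ∀ x v : E, ‖v‖ = 1 → |σ x v| ≤ M)
    (hkM : ∀ x v v₁ : E, ‖v‖ = 1 → ‖v₁‖ = 1 → |k x v v₁| ≤ M)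
    (y v : E) (hv : ‖v‖ = 1) :
    |sigmaA σ k y v| ≤ M + M * (((volume : Measure E).toSphere) Set.univ).toReal := by
  have h1 : |∫ u : Metric.sphere (0:E) 1, k y v u ∂((volume : Measure E).toSphere)| ≤
      M * (((volume : Measure E).toSphere) Set.univ).toReal := by
    have := MeasureTheory.norm_integral_le_of_norm_le_const
      (μ := (volume : Measure E).toSphere) (f := fun u : Metric.sphere (0:E) 1 => k y v u)
      (C := M) (Filter.Eventually.of_forall (fun u => by
        simpa using hkM y v u hv (by simpa using mem_sphere_zero_iff_norm.mp u.2)))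
    simpa [Measure.real] using this
  calc |sigmaA σ k y v| ≤ |σ y v| + |∫ u : Metric.sphere (0:E) 1, k y v u
        ∂((volume : Measure E).toSphere)| := abs_sub _ _
  _ ≤ M + M * (((volume : Measure E).toSphere) Set.univ).toReal :=
      add_le_add (hσM y v hv) h1

lemma phi_hasDeriv (t₀ ε θ : ℝ) (hs : Real.sin θ ≠ 0) :
    HasDerivAt (fun θ => t₀ - ε * (Real.cos θ / Real.sin θ)) (ε / Real.sin θ ^ 2) θ := by
  have h1 : HasDerivAt (fun θ => Real.cos θ / Real.sin θ)
      ((-Real.sin θ * Real.sin θ - Real.cos θ * Real.cos θ) / Real.sin θ ^ 2) θ :=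
    (Real.hasDerivAt_cos θ).div (Real.hasDerivAt_sin θ) hs
  have h2 : (-Real.sin θ * Real.sin θ - Real.cos θ * Real.cos θ) / Real.sin θ ^ 2
      = -(1 / Real.sin θ ^ 2) := by
    have h3 : Real.sin θ ^ 2 ≠ 0 := pow_ne_zero _ hs
    field_simp
    nlinarith [Real.sin_sq_add_cos_sq θ]
  rw [h2] at h1
  have := (h1.const_mul ε).const_sub t₀
  rw [show ε / Real.sin θ ^ 2 = -(ε * -(1 / Real.sin θ ^ 2)) by ring]
  exact this

lemma cot_arctan {a : ℝ} (ha : 0 < a) :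
    Real.cos (Real.arctan a) / Real.sin (Real.arctan a) = 1 / a := by
  rw [Real.cos_arctan, Real.sin_arctan]
  have h : Real.sqrt (1 + a ^ 2) ≠ 0 := by positivity
  field_simp

lemma scal (hn : 3 ≤ n) {ε s : ℝ} (hε : 0 < ε) (hs : 0 < s) :
    ε^(n-2) * ((ε / s^2) * (((ε/s)^2) ^ (-(((n:ℝ)-1)/2)))) = s^(n-3) := by
  obtain ⟨m, rfl⟩ : ∃ m, n = m + 3 := ⟨n - 3, by omega⟩
  have hb : (0:ℝ) < ε / s := by positivity
  have h1 : ((ε/s)^2 : ℝ) ^ (-((((m+3:ℕ):ℝ))-1)/2) = ((ε/s) ^ (m+2:ℕ))⁻¹ := by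
    rw [← Real.rpow_natCast (ε/s) 2, ← Real.rpow_mul hb.le]
    rw [show ((2:ℕ):ℝ) * (-(((m+3:ℕ):ℝ)-1)/2) = -((m+2:ℕ):ℝ) by push_cast; ring]
    rw [Real.rpow_neg hb.le, Real.rpow_natCast]
  rw [show (m+3)-2 = m+1 from rfl, show (m+3)-3 = m from rfl,
    show -((((m+3:ℕ):ℝ)-1)/2) = -((((m+3:ℕ):ℝ))-1)/2 by ring, h1]
  rw [div_pow, pow_add, pow_add]
  field_simp
  ring

lemma vdir_unit {v' w : E} (hv' : ‖v'‖ = 1) (hw : ‖w‖ = 1) (hwv : ⟪w, v'⟫ = 0)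
    {a b : ℝ} (hb : b ≠ 0) :
    ‖(Real.sqrt (a^2 + b^2))⁻¹ • (a • v' + b • w)‖ = 1 := by
  have hpos : (0:ℝ) < a^2 + b^2 := by positivity
  rw [norm_smul, norm_inv, Real.norm_eq_abs, abs_of_nonneg (Real.sqrt_nonneg _),
    norm_comb hv' hw hwv, inv_mul_cancel₀ (by positivity)]

lemma vv_unit {v' w : E} (hv' : ‖v'‖ = 1) (hw : ‖w‖ = 1) (hwv : ⟪w, v'⟫ = 0) (θ : ℝ) :
    ‖Real.cos θ • v' + Real.sin θ • w‖ = 1 := by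
  rw [norm_comb hv' hw hwv, Real.cos_sq_add_sin_sq, Real.sqrt_one]

end SSAux

set_option maxHeartbeats 4000000 in
theorem single_scattering_aux {n : ℕ} (hn : 3 ≤ n)
    (σ : EuclideanSpace ℝ (Fin n) → EuclideanSpace ℝ (Fin n) → ℝ)
    (k : EuclideanSpace ℝ (Fin n) → EuclideanSpace ℝ (Fin n) →
      EuclideanSpace ℝ (Fin n) → ℝ)
    (hσc : Continuous fun p : EuclideanSpace ℝ (Fin n) × EuclideanSpace ℝ (Fin n) =>
      σ p.1 p.2)
    (hkc : Continuous fun p : EuclideanSpace ℝ (Fin n) ×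
      EuclideanSpace ℝ (Fin n) × EuclideanSpace ℝ (Fin n) => k p.1 p.2.1 p.2.2)
    (M : ℝ)
    (hσM : ∀ x v : EuclideanSpace ℝ (Fin n), ‖v‖ = 1 → |σ x v| ≤ M)
    (hkM : ∀ x v v₁ : EuclideanSpace ℝ (Fin n), ‖v‖ = 1 → ‖v₁‖ = 1 → |k x v v₁| ≤ M)
    (x' v' : EuclideanSpace ℝ (Fin n)) (hv' : ‖v'‖ = 1)
    (τ t₀ : ℝ) (ht₀ : t₀ ∈ Set.Ioo 0 τ)
    (x : EuclideanSpace ℝ (Fin n)) (hx : x = x' + t₀ • v')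
    (w : EuclideanSpace ℝ (Fin n)) (hw : ‖w‖ = 1) (hwv : ⟪w, v'⟫ = 0)
    (L : ℝ → ℝ)
    (hL : ∀ ε : ℝ, 0 < ε → L ε =
      ∫ t' in (0:ℝ)..τ,
        attenuation σ (x + ε • w) (x' + t' • v') * attenuation σ (x' + t' • v') x' *
        sigmaA σ k (x + ε • w)
          ((Real.sqrt ((t₀ - t')^2 + ε^2))⁻¹ • ((t₀ - t') • v' + ε • w)) *
        k (x' + t' • v') v'
          ((Real.sqrt ((t₀ - t')^2 + ε^2))⁻¹ • ((t₀ - t') • v' + ε • w)) *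
        ((t' - t₀)^2 + ε^2) ^ (-(((n:ℝ) - 1)/2))) :
    Filter.Tendsto (fun ε : ℝ => ε ^ (n-2) * L ε) (nhdsWithin 0 (Set.Ioi 0))
      (nhds (attenuation σ x x' *
        ∫ θ in Set.Ioo (0:ℝ) π,
          (Real.sin θ) ^ (n-3) *
            sigmaA σ k x (Real.cos θ • v' + Real.sin θ • w) *
            k x v' (Real.cos θ • v' + Real.sin θ • w))) := by
  obtain ⟨ht₀0, ht₀τ⟩ := ht₀
  have hτ0 : 0 < τ := lt_trans ht₀0 ht₀τ
  have hτt : 0 < τ - t₀ := sub_pos.mpr ht₀τ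
  have hM0 : 0 ≤ M := le_trans (abs_nonneg _) (hσM x' v' hv')
  have hmS0 : 0 ≤ (((volume : Measure (EuclideanSpace ℝ (Fin n))).toSphere) Set.univ).toReal :=
    ENNReal.toReal_nonneg
  have hvvu : ∀ θ : ℝ, ‖Real.cos θ • v' + Real.sin θ • w‖ = 1 :=
    SSAux.vv_unit hv' hw hwv
  have hθa_pos : ∀ ε : ℝ, 0 < ε → 0 < Real.arctan (ε / t₀) := by
    intro ε hε
    simpa using Real.arctan_strictMono (div_pos hε ht₀0)
  have hθb_pos : ∀ ε : ℝ, 0 < ε → 0 < Real.arctan (ε / (τ - t₀)) := by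
    intro ε hε
    simpa using Real.arctan_strictMono (div_pos hε hτt)
  have hab : ∀ ε : ℝ, 0 < ε →
      Real.arctan (ε / t₀) ≤ π - Real.arctan (ε / (τ - t₀)) := by
    intro ε hε
    have h1 := Real.arctan_lt_pi_div_two (ε / t₀)
    have h2 := Real.arctan_lt_pi_div_two (ε / (τ - t₀))
    linarith
  have hsub : ∀ ε : ℝ, 0 < ε →
      Set.Icc (Real.arctan (ε / t₀)) (π - Real.arctan (ε / (τ - t₀))) ⊆ Set.Ioo 0 π := by
    intro ε hε θ hθ
    constructor
    · exact lt_of_lt_of_le (hθa_pos ε hε) hθ.1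
    · have := hθb_pos ε hε
      have := hθ.2
      linarith
  have hsin : ∀ ε : ℝ, 0 < ε → ∀ θ ∈ Set.Icc (Real.arctan (ε / t₀))
      (π - Real.arctan (ε / (τ - t₀))), 0 < Real.sin θ := by
    intro ε hε θ hθ
    obtain ⟨h1, h2⟩ := hsub ε hε hθ
    exact Real.sin_pos_of_pos_of_lt_pi h1 h2
  have hφa : ∀ ε : ℝ, 0 < ε →
      t₀ - ε * (Real.cos (Real.arctan (ε / t₀)) / Real.sin (Real.arctan (ε / t₀))) = 0 := by
    intro ε hε
    rw [SSAux.cot_arctan (div_pos hε ht₀0)]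
    field_simp
    ring
  have hφb : ∀ ε : ℝ, 0 < ε →
      t₀ - ε * (Real.cos (π - Real.arctan (ε / (τ - t₀))) /
        Real.sin (π - Real.arctan (ε / (τ - t₀)))) = τ := by
    intro ε hε
    rw [Real.cos_pi_sub, Real.sin_pi_sub, neg_div, SSAux.cot_arctan (div_pos hε hτt)]
    field_simp
    ring
  have hmono : ∀ ε : ℝ, 0 < ε → StrictMonoOn (fun θ : ℝ => t₀ - ε * (Real.cos θ / Real.sin θ))
      (Set.Icc (Real.arctan (ε / t₀)) (π - Real.arctan (ε / (τ - t₀)))) := by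
    intro ε hε
    apply strictMonoOn_of_deriv_pos (convex_Icc _ _)
    · intro θ hθ
      exact ((SSAux.phi_hasDeriv t₀ ε θ (ne_of_gt (hsin ε hε θ hθ))).continuousAt).continuousWithinAt
    · intro θ hθ
      rw [interior_Icc] at hθ
      have hs := hsin ε hε θ (Set.Ioo_subset_Icc_self hθ)
      rw [(SSAux.phi_hasDeriv t₀ ε θ (ne_of_gt hs)).deriv]
      positivity
  have hφmem : ∀ ε : ℝ, 0 < ε → ∀ θ ∈ Set.Icc (Real.arctan (ε / t₀))
      (π - Real.arctan (ε / (τ - t₀))),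
      (t₀ - ε * (Real.cos θ / Real.sin θ)) ∈ Set.Icc (0:ℝ) τ := by
    intro ε hε θ hθ
    have hmem_a : Real.arctan (ε / t₀) ∈ Set.Icc (Real.arctan (ε / t₀))
        (π - Real.arctan (ε / (τ - t₀))) := ⟨le_refl _, hab ε hε⟩
    have hmem_b : (π - Real.arctan (ε / (τ - t₀))) ∈ Set.Icc (Real.arctan (ε / t₀))
        (π - Real.arctan (ε / (τ - t₀))) := ⟨hab ε hε, le_refl _⟩
    constructor
    · rw [← hφa ε hε]
      exact (hmono ε hε).monotoneOn hmem_a hθ hθ.1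
    · rw [← hφb ε hε]
      exact (hmono ε hε).monotoneOn hθ hmem_b hθ.2
  have key : ∀ ε : ℝ, 0 < ε → ε ^ (n-2) * L ε =
      ∫ θ in (Real.arctan (ε / t₀))..(π - Real.arctan (ε / (τ - t₀))),
        Real.sin θ ^ (n-3) * (attenuation σ (x + ε • w) (x' + (t₀ - ε * (Real.cos θ / Real.sin θ)) • v') *
        Real.exp (-(∫ s in (0:ℝ)..(t₀ - ε * (Real.cos θ / Real.sin θ)), σ (x' + ((t₀ - ε * (Real.cos θ / Real.sin θ)) - s) • v') v')) *
        sigmaA σ k (x + ε • w) (Real.cos θ • v' + Real.sin θ • w) *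
        k (x' + (t₀ - ε * (Real.cos θ / Real.sin θ)) • v') v' (Real.cos θ • v' + Real.sin θ • w)) := by
    intro ε hε
    have hdiff : ∀ t' : ℝ, x + ε • w - (x' + t' • v') = (t₀ - t') • v' + ε • w := by
      intro t'; rw [hx]; module
    have hNt : ∀ t' : ℝ, ‖x + ε • w - (x' + t' • v')‖ = Real.sqrt ((t₀ - t')^2 + ε^2) := by
      intro t'; rw [hdiff t', SSAux.norm_comb hv' hw hwv]
    have hNpos : ∀ t' : ℝ, 0 < Real.sqrt ((t₀ - t')^2 + ε^2) := by
      intro t'; positivity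
    have hne : ∀ t' : ℝ, x + ε • w ≠ x' + t' • v' := by
      intro t' h
      have h0 := hNt t'
      rw [h, sub_self, norm_zero] at h0
      exact absurd h0.symm (ne_of_gt (hNpos t'))
    have hfc : ContinuousOn (fun t' : ℝ =>
        attenuation σ (x + ε • w) (x' + t' • v') * attenuation σ (x' + t' • v') x' *
        sigmaA σ k (x + ε • w)
          ((Real.sqrt ((t₀ - t')^2 + ε^2))⁻¹ • ((t₀ - t') • v' + ε • w)) *
        k (x' + t' • v') v'
          ((Real.sqrt ((t₀ - t')^2 + ε^2))⁻¹ • ((t₀ - t') • v' + ε • w)) *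
        ((t' - t₀)^2 + ε^2) ^ (-(((n:ℝ) - 1)/2))) (Set.Icc 0 τ) := by
      have c1 : Continuous fun t' : ℝ => attenuation σ (x + ε • w) (x' + t' • v') :=
        SSAux.continuous_att_param hσc _ _ (by fun_prop) hne
      have csqrt : Continuous fun t' : ℝ => Real.sqrt ((t₀ - t')^2 + ε^2) :=
        Real.continuous_sqrt.comp (by fun_prop)
      have cdir : Continuous fun t' : ℝ =>
          (Real.sqrt ((t₀ - t')^2 + ε^2))⁻¹ • ((t₀ - t') • v' + ε • w) :=
        (csqrt.inv₀ (fun t' => ne_of_gt (hNpos t'))).smul (by fun_prop)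
      have c3 : Continuous fun t' : ℝ => sigmaA σ k (x + ε • w)
          ((Real.sqrt ((t₀ - t')^2 + ε^2))⁻¹ • ((t₀ - t') • v' + ε • w)) :=
        (SSAux.continuous_sigmaA hσc hkc).comp (continuous_const.prodMk cdir)
      have c4 : Continuous fun t' : ℝ => k (x' + t' • v') v'
          ((Real.sqrt ((t₀ - t')^2 + ε^2))⁻¹ • ((t₀ - t') • v' + ε • w)) :=
        hkc.comp ((by fun_prop : Continuous fun t' : ℝ => x' + t' • v').prodMk
          (continuous_const.prodMk cdir))
      have c5 : Continuous fun t' : ℝ => ((t' - t₀)^2 + ε^2) ^ (-(((n:ℝ) - 1)/2)) := by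
        apply Continuous.rpow_const (by fun_prop)
        intro t'; exact Or.inl (by positivity)
      have c2 : ContinuousOn (fun t' : ℝ => attenuation σ (x' + t' • v') x') (Set.Icc 0 τ) := by
        apply ContinuousOn.congr (f := fun t' : ℝ =>
          Real.exp (-(∫ s in (0:ℝ)..t', σ (x' + (t' - s) • v') v')))
        · exact (Real.continuous_exp.comp (SSAux.continuous_G hσc x' v').neg).continuousOn
        · intro t' ht'
          exact SSAux.att2_eq hv' ht'.1
      exact ((((c1.continuousOn.mul c2).mul c3.continuousOn).mul c4.continuousOn).mul
        c5.continuousOn)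
    have hder : ∀ θ ∈ Set.uIcc (Real.arctan (ε / t₀)) (π - Real.arctan (ε / (τ - t₀))),
        HasDerivAt (fun θ : ℝ => t₀ - ε * (Real.cos θ / Real.sin θ)) (ε / Real.sin θ ^ 2) θ := by
      intro θ hθ
      rw [Set.uIcc_of_le (hab ε hε)] at hθ
      exact SSAux.phi_hasDeriv t₀ ε θ (ne_of_gt (hsin ε hε θ hθ))
    have hder' : ContinuousOn (fun θ : ℝ => ε / Real.sin θ ^ 2)
        (Set.uIcc (Real.arctan (ε / t₀)) (π - Real.arctan (ε / (τ - t₀)))) := by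
      rw [Set.uIcc_of_le (hab ε hε)]
      exact continuousOn_const.div ((Real.continuous_sin.pow 2).continuousOn)
        (fun θ hθ => pow_ne_zero _ (ne_of_gt (hsin ε hε θ hθ)))
    have himg : (fun θ : ℝ => t₀ - ε * (Real.cos θ / Real.sin θ)) ''
        Set.uIcc (Real.arctan (ε / t₀)) (π - Real.arctan (ε / (τ - t₀))) ⊆ Set.Icc 0 τ := by
      rw [Set.uIcc_of_le (hab ε hε)]
      rintro _ ⟨θ, hθ, rfl⟩
      exact hφmem ε hε θ hθ
    have cov := intervalIntegral.integral_comp_smul_deriv'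
      (a := Real.arctan (ε / t₀)) (b := π - Real.arctan (ε / (τ - t₀)))
      (f := fun θ : ℝ => t₀ - ε * (Real.cos θ / Real.sin θ))
      (f' := fun θ : ℝ => ε / Real.sin θ ^ 2)
      (g := fun t' : ℝ =>
        attenuation σ (x + ε • w) (x' + t' • v') * attenuation σ (x' + t' • v') x' *
        sigmaA σ k (x + ε • w)
          ((Real.sqrt ((t₀ - t')^2 + ε^2))⁻¹ • ((t₀ - t') • v' + ε • w)) *
        k (x' + t' • v') v'
          ((Real.sqrt ((t₀ - t')^2 + ε^2))⁻¹ • ((t₀ - t') • v' + ε • w)) *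
        ((t' - t₀)^2 + ε^2) ^ (-(((n:ℝ) - 1)/2))) hder hder' (hfc.mono himg)
    beta_reduce at cov
    rw [hφa ε hε, hφb ε hε] at cov
    rw [hL ε hε, ← cov, ← intervalIntegral.integral_const_mul]
    apply intervalIntegral.integral_congr
    intro θ hθ
    rw [Set.uIcc_of_le (hab ε hε)] at hθ
    have hs := hsin ε hε θ hθ
    have hsne : Real.sin θ ≠ 0 := ne_of_gt hs
    have hφm := hφmem ε hε θ hθ
    beta_reduce
    simp only [Function.comp_apply]
    have h1 : t₀ - (t₀ - ε * (Real.cos θ / Real.sin θ)) = ε * (Real.cos θ / Real.sin θ) := by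
      ring
    have h2 : (t₀ - ε * (Real.cos θ / Real.sin θ)) - t₀ = -(ε * (Real.cos θ / Real.sin θ)) := by
      ring
    rw [h1, h2]
    have hneg : (-(ε * (Real.cos θ / Real.sin θ)))^2 = (ε * (Real.cos θ / Real.sin θ))^2 := by
      ring
    have hsq : (ε * (Real.cos θ / Real.sin θ))^2 + ε^2 = (ε / Real.sin θ)^2 := by
      field_simp
      nlinarith [Real.sin_sq_add_cos_sq θ]
    rw [hneg, hsq, Real.sqrt_sq (by positivity : (0:ℝ) ≤ ε / Real.sin θ)]
    have e1 : (ε / Real.sin θ)⁻¹ * (ε * (Real.cos θ / Real.sin θ)) = Real.cos θ := by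
      field_simp
    have e2 : (ε / Real.sin θ)⁻¹ * ε = Real.sin θ := by
      field_simp
    simp only [smul_add, smul_smul]
    rw [e1, e2]
    rw [SSAux.att2_eq hv' hφm.1]
    rw [smul_eq_mul]
    linear_combination (attenuation σ (x + ε • w) (x' + (t₀ - ε * (Real.cos θ / Real.sin θ)) • v') *
      Real.exp (-(∫ s in (0:ℝ)..(t₀ - ε * (Real.cos θ / Real.sin θ)), σ (x' + ((t₀ - ε * (Real.cos θ / Real.sin θ)) - s) • v') v')) *
      sigmaA σ k (x + ε • w) (Real.cos θ • v' + Real.sin θ • w) *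
      k (x' + (t₀ - ε * (Real.cos θ / Real.sin θ)) • v') v' (Real.cos θ • v' + Real.sin θ • w)) * SSAux.scal hn hε hs
  have hC0 : 0 ≤ Real.exp (M * (τ + 1)) * Real.exp (M * τ) *
      (M + M * (((volume : Measure (EuclideanSpace ℝ (Fin n))).toSphere) Set.univ).toReal) * M := by
    have h1 : 0 ≤ M + M * (((volume : Measure (EuclideanSpace ℝ (Fin n))).toSphere)
        Set.univ).toReal := by
      have := mul_nonneg hM0 hmS0
      linarith
    have h2 := Real.exp_pos (M * (τ + 1))
    have h3 := Real.exp_pos (M * τ)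
    exact mul_nonneg (mul_nonneg (mul_nonneg h2.le h3.le) h1) hM0
  have hIoc1 : Set.Ioc (0:ℝ) 1 ∈ nhdsWithin (0:ℝ) (Set.Ioi 0) := by
    have h1 : Set.Iio (1:ℝ) ∈ nhds (0:ℝ) := Iio_mem_nhds one_pos
    exact Filter.mem_of_superset
      (Filter.inter_mem (mem_nhdsWithin_of_mem_nhds h1) self_mem_nhdsWithin)
      (fun y hy => ⟨hy.2, le_of_lt hy.1⟩)
  have hFmeas : ∀ᶠ ε in nhdsWithin (0:ℝ) (Set.Ioi 0), MeasureTheory.AEStronglyMeasurable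
      (fun θ => (Set.indicator (Set.Ioc (Real.arctan (ε / t₀)) (π - Real.arctan (ε / (τ - t₀))))
      (fun θ => Real.sin θ ^ (n-3) * (attenuation σ (x + ε • w) (x' + (t₀ - ε * (Real.cos θ / Real.sin θ)) • v') *
        Real.exp (-(∫ s in (0:ℝ)..(t₀ - ε * (Real.cos θ / Real.sin θ)), σ (x' + ((t₀ - ε * (Real.cos θ / Real.sin θ)) - s) • v') v')) *
        sigmaA σ k (x + ε • w) (Real.cos θ • v' + Real.sin θ • w) *
        k (x' + (t₀ - ε * (Real.cos θ / Real.sin θ)) • v') v' (Real.cos θ • v' + Real.sin θ • w)))) θ) (volume : Measure ℝ) := by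
    filter_upwards [self_mem_nhdsWithin] with ε hε
    rw [Set.mem_Ioi] at hε
    rw [aestronglyMeasurable_indicator_iff measurableSet_Ioc]
    apply ContinuousOn.aestronglyMeasurable _ measurableSet_Ioc
    have hsne : ∀ θ ∈ Set.Ioc (Real.arctan (ε / t₀)) (π - Real.arctan (ε / (τ - t₀))),
        Real.sin θ ≠ 0 := fun θ hθ => ne_of_gt (hsin ε hε θ ⟨le_of_lt hθ.1, hθ.2⟩)
    have cφ : ContinuousOn (fun θ : ℝ => t₀ - ε * (Real.cos θ / Real.sin θ))
        (Set.Ioc (Real.arctan (ε / t₀)) (π - Real.arctan (ε / (τ - t₀)))) :=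
      continuousOn_const.sub (continuousOn_const.mul
        (Real.continuous_cos.continuousOn.div Real.continuous_sin.continuousOn hsne))
    have hne : ∀ t' : ℝ, x + ε • w ≠ x' + t' • v' := by
      intro t' h
      have h0 : x + ε • w - (x' + t' • v') = (t₀ - t') • v' + ε • w := by rw [hx]; module
      rw [h, sub_self] at h0
      have h1 : ‖(0 : EuclideanSpace ℝ (Fin n))‖ = Real.sqrt ((t₀ - t')^2 + ε^2) := by
        rw [h0, SSAux.norm_comb hv' hw hwv]
      rw [norm_zero] at h1
      have h2 : (0:ℝ) < Real.sqrt ((t₀ - t')^2 + ε^2) := by positivity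
      exact absurd h1.symm (ne_of_gt h2)
    have catt1 : Continuous fun t' : ℝ => attenuation σ (x + ε • w) (x' + t' • v') :=
      SSAux.continuous_att_param hσc _ _ (by fun_prop) hne
    have c1 : ContinuousOn (fun θ : ℝ => attenuation σ (x + ε • w) (x' + (t₀ - ε * (Real.cos θ / Real.sin θ)) • v'))
        (Set.Ioc (Real.arctan (ε / t₀)) (π - Real.arctan (ε / (τ - t₀)))) :=
      catt1.comp_continuousOn cφ
    have c2 : ContinuousOn (fun θ : ℝ => Real.exp (-(∫ s in (0:ℝ)..(t₀ - ε * (Real.cos θ / Real.sin θ)), σ (x' + ((t₀ - ε * (Real.cos θ / Real.sin θ)) - s) • v') v')))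
        (Set.Ioc (Real.arctan (ε / t₀)) (π - Real.arctan (ε / (τ - t₀)))) :=
      (Real.continuous_exp.comp (SSAux.continuous_G hσc x' v').neg).comp_continuousOn cφ
    have c3 : ContinuousOn (fun θ : ℝ => sigmaA σ k (x + ε • w) (Real.cos θ • v' + Real.sin θ • w))
        (Set.Ioc (Real.arctan (ε / t₀)) (π - Real.arctan (ε / (τ - t₀)))) :=
      ((SSAux.continuous_sigmaA hσc hkc).comp (continuous_const.prodMk
        (by fun_prop : Continuous fun θ : ℝ =>
          Real.cos θ • v' + Real.sin θ • w))).continuousOn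
    have c4 : ContinuousOn (fun θ : ℝ => k (x' + (t₀ - ε * (Real.cos θ / Real.sin θ)) • v') v' (Real.cos θ • v' + Real.sin θ • w))
        (Set.Ioc (Real.arctan (ε / t₀)) (π - Real.arctan (ε / (τ - t₀)))) :=
      hkc.comp_continuousOn ((continuousOn_const.add (cφ.smul continuousOn_const)).prodMk
        ((continuous_const.prodMk (by fun_prop : Continuous fun θ : ℝ =>
          Real.cos θ • v' + Real.sin θ • w)).continuousOn))
    exact ((Real.continuous_sin.pow _).continuousOn).mul (((c1.mul c2).mul c3).mul c4)
  have hbound : ∀ᶠ ε in nhdsWithin (0:ℝ) (Set.Ioi 0), ∀ᵐ θ ∂(volume : Measure ℝ),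
      ‖(Set.indicator (Set.Ioc (Real.arctan (ε / t₀)) (π - Real.arctan (ε / (τ - t₀))))
      (fun θ => Real.sin θ ^ (n-3) * (attenuation σ (x + ε • w) (x' + (t₀ - ε * (Real.cos θ / Real.sin θ)) • v') *
        Real.exp (-(∫ s in (0:ℝ)..(t₀ - ε * (Real.cos θ / Real.sin θ)), σ (x' + ((t₀ - ε * (Real.cos θ / Real.sin θ)) - s) • v') v')) *
        sigmaA σ k (x + ε • w) (Real.cos θ • v' + Real.sin θ • w) *
        k (x' + (t₀ - ε * (Real.cos θ / Real.sin θ)) • v') v' (Real.cos θ • v' + Real.sin θ • w)))) θ‖ ≤ Set.indicator (Set.Ioo (0:ℝ) π) (fun _ => Real.exp (M * (τ + 1)) * Real.exp (M * τ) *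
      (M + M * (((volume : Measure (EuclideanSpace ℝ (Fin n))).toSphere) Set.univ).toReal) * M) θ := by
    filter_upwards [hIoc1] with ε hεm
    obtain ⟨hε, hε1⟩ := hεm
    filter_upwards with θ
    by_cases hθ : θ ∈ Set.Ioc (Real.arctan (ε / t₀)) (π - Real.arctan (ε / (τ - t₀)))
    · have hθI : θ ∈ Set.Icc (Real.arctan (ε / t₀)) (π - Real.arctan (ε / (τ - t₀))) :=
        ⟨le_of_lt hθ.1, hθ.2⟩
      have hθIoo : θ ∈ Set.Ioo (0:ℝ) π := hsub ε hε hθI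
      rw [Set.indicator_of_mem hθ, Set.indicator_of_mem hθIoo]
      have hφm := hφmem ε hε θ hθI
      have hN : ‖x + ε • w - (x' + (t₀ - ε * (Real.cos θ / Real.sin θ)) • v')‖ = Real.sqrt ((t₀ - (t₀ - ε * (Real.cos θ / Real.sin θ)))^2 + ε^2) := by
        rw [show x + ε • w - (x' + (t₀ - ε * (Real.cos θ / Real.sin θ)) • v') = (t₀ - (t₀ - ε * (Real.cos θ / Real.sin θ))) • v' + ε • w by rw [hx]; module,
          SSAux.norm_comb hv' hw hwv]
      have hsqle : Real.sqrt ((t₀ - (t₀ - ε * (Real.cos θ / Real.sin θ)))^2 + ε^2) ≤ τ + 1 := by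
        have h1 : (t₀ - (t₀ - ε * (Real.cos θ / Real.sin θ)))^2 ≤ τ^2 := by
          apply sq_le_sq'
          · linarith [hφm.1, hφm.2]
          · linarith [hφm.1, hφm.2]
        have h2 : (t₀ - (t₀ - ε * (Real.cos θ / Real.sin θ)))^2 + ε^2 ≤ (τ+1)^2 := by nlinarith [hτ0.le, hε.le, hε1]
        calc Real.sqrt ((t₀ - (t₀ - ε * (Real.cos θ / Real.sin θ)))^2 + ε^2) ≤ Real.sqrt ((τ+1)^2) := Real.sqrt_le_sqrt h2
        _ = τ + 1 := Real.sqrt_sq (by linarith)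
      have b1 : |attenuation σ (x + ε • w) (x' + (t₀ - ε * (Real.cos θ / Real.sin θ)) • v')| ≤ Real.exp (M * (τ + 1)) := by
        have hIb := SSAux.att_integral_bound hσM (x + ε • w) (x' + (t₀ - ε * (Real.cos θ / Real.sin θ)) • v')
        rw [hN] at hIb
        have h3 : M * Real.sqrt ((t₀ - (t₀ - ε * (Real.cos θ / Real.sin θ)))^2 + ε^2) ≤ M * (τ + 1) :=
          mul_le_mul_of_nonneg_left hsqle hM0
        unfold attenuation
        rw [hN, abs_of_pos (Real.exp_pos _)]
        exact Real.exp_le_exp.mpr (le_trans (neg_le_abs _) (le_trans hIb h3))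
      have hGb' : |∫ s in (0:ℝ)..(t₀ - ε * (Real.cos θ / Real.sin θ)), σ (x' + ((t₀ - ε * (Real.cos θ / Real.sin θ)) - s) • v') v'| ≤ M * τ := by
        have hGb := intervalIntegral.norm_integral_le_of_norm_le_const
          (a := (0:ℝ)) (b := (t₀ - ε * (Real.cos θ / Real.sin θ))) (C := M)
          (f := fun s => σ (x' + ((t₀ - ε * (Real.cos θ / Real.sin θ)) - s) • v') v') (fun s _ => hσM _ _ hv')
        calc |∫ s in (0:ℝ)..(t₀ - ε * (Real.cos θ / Real.sin θ)), σ (x' + ((t₀ - ε * (Real.cos θ / Real.sin θ)) - s) • v') v'|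
            ≤ M * |(t₀ - ε * (Real.cos θ / Real.sin θ)) - 0| := by simpa using hGb
        _ ≤ M * τ := by
            rw [sub_zero, abs_of_nonneg hφm.1]
            exact mul_le_mul_of_nonneg_left hφm.2 hM0
      have b2 : |Real.exp (-(∫ s in (0:ℝ)..(t₀ - ε * (Real.cos θ / Real.sin θ)), σ (x' + ((t₀ - ε * (Real.cos θ / Real.sin θ)) - s) • v') v'))| ≤ Real.exp (M * τ) := by
        rw [abs_of_pos (Real.exp_pos _)]
        exact Real.exp_le_exp.mpr (le_trans (neg_le_abs _) hGb')
      have b3 := SSAux.sigmaA_bound hσM hkM (x + ε • w) _ (hvvu θ)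
      have b4 := hkM (x' + (t₀ - ε * (Real.cos θ / Real.sin θ)) • v') v' (Real.cos θ • v' + Real.sin θ • w) hv' (hvvu θ)
      beta_reduce
      rw [Real.norm_eq_abs, abs_mul]
      have hsinb : |Real.sin θ ^ (n-3)| ≤ 1 := by
        rw [abs_pow]
        exact pow_le_one₀ (abs_nonneg _)
          (abs_le.mpr ⟨Real.neg_one_le_sin θ, Real.sin_le_one θ⟩)
      have hprod : |attenuation σ (x + ε • w) (x' + (t₀ - ε * (Real.cos θ / Real.sin θ)) • v') *
        Real.exp (-(∫ s in (0:ℝ)..(t₀ - ε * (Real.cos θ / Real.sin θ)), σ (x' + ((t₀ - ε * (Real.cos θ / Real.sin θ)) - s) • v') v')) *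
        sigmaA σ k (x + ε • w) (Real.cos θ • v' + Real.sin θ • w) *
        k (x' + (t₀ - ε * (Real.cos θ / Real.sin θ)) • v') v' (Real.cos θ • v' + Real.sin θ • w)| ≤ Real.exp (M * (τ + 1)) * Real.exp (M * τ) *
          (M + M * (((volume : Measure (EuclideanSpace ℝ (Fin n))).toSphere)
            Set.univ).toReal) * M := by
        rw [abs_mul, abs_mul, abs_mul]
        have h12 : |attenuation σ (x + ε • w) (x' + (t₀ - ε * (Real.cos θ / Real.sin θ)) • v')| * |Real.exp (-(∫ s in (0:ℝ)..(t₀ - ε * (Real.cos θ / Real.sin θ)), σ (x' + ((t₀ - ε * (Real.cos θ / Real.sin θ)) - s) • v') v'))| ≤ Real.exp (M * (τ + 1)) * Real.exp (M * τ) :=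
          mul_le_mul b1 b2 (abs_nonneg _) (Real.exp_pos _).le
        have hm3 : (0:ℝ) ≤ Real.exp (M * (τ + 1)) * Real.exp (M * τ) *
            (M + M * (((volume : Measure (EuclideanSpace ℝ (Fin n))).toSphere)
              Set.univ).toReal) := by
          apply mul_nonneg (mul_nonneg (Real.exp_pos _).le (Real.exp_pos _).le)
          have := mul_nonneg hM0 hmS0
          linarith
        have h123 : |attenuation σ (x + ε • w) (x' + (t₀ - ε * (Real.cos θ / Real.sin θ)) • v')| * |Real.exp (-(∫ s in (0:ℝ)..(t₀ - ε * (Real.cos θ / Real.sin θ)), σ (x' + ((t₀ - ε * (Real.cos θ / Real.sin θ)) - s) • v') v'))| * |sigmaA σ k (x + ε • w) (Real.cos θ • v' + Real.sin θ • w)| ≤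
            Real.exp (M * (τ + 1)) * Real.exp (M * τ) *
            (M + M * (((volume : Measure (EuclideanSpace ℝ (Fin n))).toSphere)
              Set.univ).toReal) :=
          mul_le_mul h12 b3 (abs_nonneg _) (mul_nonneg (Real.exp_pos _).le (Real.exp_pos _).le)
        exact mul_le_mul h123 b4 (abs_nonneg _) hm3
      have hfin := mul_le_mul hsinb hprod (abs_nonneg _) zero_le_one
      rw [one_mul] at hfin
      exact hfin
    · rw [Set.indicator_of_notMem hθ, norm_zero]
      exact Set.indicator_nonneg (fun _ _ => hC0) θ
  have hbint : MeasureTheory.Integrable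
      (Set.indicator (Set.Ioo (0:ℝ) π) (fun _ => Real.exp (M * (τ + 1)) * Real.exp (M * τ) *
      (M + M * (((volume : Measure (EuclideanSpace ℝ (Fin n))).toSphere) Set.univ).toReal) * M)) (volume : Measure ℝ) := by
    rw [MeasureTheory.integrable_indicator_iff measurableSet_Ioo]
    exact (MeasureTheory.integrableOn_const_iff (C := _)).mpr (Or.inr measure_Ioo_lt_top)
  have hlim : ∀ᵐ θ ∂(volume : Measure ℝ), Filter.Tendsto (fun ε => (Set.indicator (Set.Ioc (Real.arctan (ε / t₀)) (π - Real.arctan (ε / (τ - t₀))))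
      (fun θ => Real.sin θ ^ (n-3) * (attenuation σ (x + ε • w) (x' + (t₀ - ε * (Real.cos θ / Real.sin θ)) • v') *
        Real.exp (-(∫ s in (0:ℝ)..(t₀ - ε * (Real.cos θ / Real.sin θ)), σ (x' + ((t₀ - ε * (Real.cos θ / Real.sin θ)) - s) • v') v')) *
        sigmaA σ k (x + ε • w) (Real.cos θ • v' + Real.sin θ • w) *
        k (x' + (t₀ - ε * (Real.cos θ / Real.sin θ)) • v') v' (Real.cos θ • v' + Real.sin θ • w)))) θ)
      (nhdsWithin (0:ℝ) (Set.Ioi 0)) (nhds ((Set.indicator (Set.Ioo (0:ℝ) π) (fun θ => Real.sin θ ^ (n-3) *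
      (1 * Real.exp (-(∫ s in (0:ℝ)..t₀, σ (x' + (t₀ - s) • v') v')) *
       sigmaA σ k x (Real.cos θ • v' + Real.sin θ • w) *
       k x v' (Real.cos θ • v' + Real.sin θ • w)))) θ)) := by
    filter_upwards with θ
    by_cases hθ : θ ∈ Set.Ioo (0:ℝ) π
    · rw [Set.indicator_of_mem hθ]
      have hta : Filter.Tendsto (fun ε : ℝ => Real.arctan (ε / t₀))
          (nhdsWithin (0:ℝ) (Set.Ioi 0)) (nhds 0) := by
        have hc : Continuous fun ε : ℝ => Real.arctan (ε / t₀) :=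
          Real.continuous_arctan.comp (continuous_id.div_const _)
        have := (hc.tendsto 0).mono_left (nhdsWithin_le_nhds : nhdsWithin (0:ℝ) (Set.Ioi 0) ≤ nhds 0)
        simpa using this
      have htb : Filter.Tendsto (fun ε : ℝ => π - Real.arctan (ε / (τ - t₀)))
          (nhdsWithin (0:ℝ) (Set.Ioi 0)) (nhds π) := by
        have hc : Continuous fun ε : ℝ => π - Real.arctan (ε / (τ - t₀)) :=
          continuous_const.sub (Real.continuous_arctan.comp (continuous_id.div_const _))
        have := (hc.tendsto 0).mono_left (nhdsWithin_le_nhds : nhdsWithin (0:ℝ) (Set.Ioi 0) ≤ nhds 0)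
        simpa using this
      have hev : ∀ᶠ ε in nhdsWithin (0:ℝ) (Set.Ioi 0),
          θ ∈ Set.Ioc (Real.arctan (ε / t₀)) (π - Real.arctan (ε / (τ - t₀))) := by
        filter_upwards [hta.eventually_lt_const hθ.1, htb.eventually_const_lt hθ.2]
          with ε h1 h2
        exact ⟨h1, le_of_lt h2⟩
      have hφt : Filter.Tendsto (fun ε : ℝ => t₀ - ε * (Real.cos θ / Real.sin θ))
          (nhdsWithin (0:ℝ) (Set.Ioi 0)) (nhds t₀) := by
        have hc : Continuous fun ε : ℝ => t₀ - ε * (Real.cos θ / Real.sin θ) := by fun_prop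
        have := (hc.tendsto 0).mono_left (nhdsWithin_le_nhds : nhdsWithin (0:ℝ) (Set.Ioi 0) ≤ nhds 0)
        simpa using this
      have hpt : Filter.Tendsto (fun ε : ℝ => x + ε • w)
          (nhdsWithin (0:ℝ) (Set.Ioi 0)) (nhds x) := by
        have hc : Continuous fun ε : ℝ => x + ε • w := by fun_prop
        have := (hc.tendsto 0).mono_left (nhdsWithin_le_nhds : nhdsWithin (0:ℝ) (Set.Ioi 0) ≤ nhds 0)
        simpa using this
      have hqt : Filter.Tendsto (fun ε : ℝ => x' + (t₀ - ε * (Real.cos θ / Real.sin θ)) • v')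
          (nhdsWithin (0:ℝ) (Set.Ioi 0)) (nhds x) := by
        have hc : Continuous fun p : ℝ => x' + p • v' := by fun_prop
        have h2 := (hc.tendsto t₀).comp hφt
        rw [← hx] at h2
        exact h2
      have T1 : Filter.Tendsto (fun ε : ℝ => attenuation σ (x + ε • w) (x' + (t₀ - ε * (Real.cos θ / Real.sin θ)) • v'))
          (nhdsWithin (0:ℝ) (Set.Ioi 0)) (nhds 1) :=
        SSAux.tendsto_att_one hσM hpt hqt
      have T2 : Filter.Tendsto (fun ε : ℝ => Real.exp (-(∫ s in (0:ℝ)..(t₀ - ε * (Real.cos θ / Real.sin θ)), σ (x' + ((t₀ - ε * (Real.cos θ / Real.sin θ)) - s) • v') v')))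
          (nhdsWithin (0:ℝ) (Set.Ioi 0))
          (nhds (Real.exp (-(∫ s in (0:ℝ)..t₀, σ (x' + (t₀ - s) • v') v')))) :=
        ((Real.continuous_exp.comp (SSAux.continuous_G hσc x' v').neg).tendsto t₀).comp hφt
      have T3 : Filter.Tendsto (fun ε : ℝ => sigmaA σ k (x + ε • w) (Real.cos θ • v' + Real.sin θ • w))
          (nhdsWithin (0:ℝ) (Set.Ioi 0))
          (nhds (sigmaA σ k x (Real.cos θ • v' + Real.sin θ • w))) :=
        ((SSAux.continuous_sigmaA hσc hkc).tendsto
          (x, Real.cos θ • v' + Real.sin θ • w)).comp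
          (hpt.prodMk_nhds tendsto_const_nhds)
      have T4 : Filter.Tendsto (fun ε : ℝ => k (x' + (t₀ - ε * (Real.cos θ / Real.sin θ)) • v') v' (Real.cos θ • v' + Real.sin θ • w))
          (nhdsWithin (0:ℝ) (Set.Ioi 0))
          (nhds (k x v' (Real.cos θ • v' + Real.sin θ • w))) :=
        (hkc.tendsto (x, v', Real.cos θ • v' + Real.sin θ • w)).comp
          (hqt.prodMk_nhds (tendsto_const_nhds.prodMk_nhds tendsto_const_nhds))
      refine Filter.Tendsto.congr' ?_ (Filter.Tendsto.const_mul (Real.sin θ ^ (n-3))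
        (((T1.mul T2).mul T3).mul T4))
      filter_upwards [hev] with ε hm
      exact (Set.indicator_of_mem hm (fun θ => Real.sin θ ^ (n-3) * (attenuation σ (x + ε • w) (x' + (t₀ - ε * (Real.cos θ / Real.sin θ)) • v') *
        Real.exp (-(∫ s in (0:ℝ)..(t₀ - ε * (Real.cos θ / Real.sin θ)), σ (x' + ((t₀ - ε * (Real.cos θ / Real.sin θ)) - s) • v') v')) *
        sigmaA σ k (x + ε • w) (Real.cos θ • v' + Real.sin θ • w) *
        k (x' + (t₀ - ε * (Real.cos θ / Real.sin θ)) • v') v' (Real.cos θ • v' + Real.sin θ • w)))).symm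
    · rw [Set.indicator_of_notMem hθ]
      refine Filter.Tendsto.congr' ?_ tendsto_const_nhds
      filter_upwards [self_mem_nhdsWithin] with ε hε
      rw [Set.mem_Ioi] at hε
      have hnot : θ ∉ Set.Ioc (Real.arctan (ε / t₀)) (π - Real.arctan (ε / (τ - t₀))) :=
        fun hm => hθ (hsub ε hε ⟨le_of_lt hm.1, hm.2⟩)
      exact (Set.indicator_of_notMem hnot _).symm
  have hmain := MeasureTheory.tendsto_integral_filter_of_dominated_convergence
    (μ := (volume : Measure ℝ))
    (F := fun (ε : ℝ) (θ : ℝ) => (Set.indicator (Set.Ioc (Real.arctan (ε / t₀)) (π - Real.arctan (ε / (τ - t₀))))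
      (fun θ => Real.sin θ ^ (n-3) * (attenuation σ (x + ε • w) (x' + (t₀ - ε * (Real.cos θ / Real.sin θ)) • v') *
        Real.exp (-(∫ s in (0:ℝ)..(t₀ - ε * (Real.cos θ / Real.sin θ)), σ (x' + ((t₀ - ε * (Real.cos θ / Real.sin θ)) - s) • v') v')) *
        sigmaA σ k (x + ε • w) (Real.cos θ • v' + Real.sin θ • w) *
        k (x' + (t₀ - ε * (Real.cos θ / Real.sin θ)) • v') v' (Real.cos θ • v' + Real.sin θ • w)))) θ)
    (f := fun θ : ℝ => (Set.indicator (Set.Ioo (0:ℝ) π) (fun θ => Real.sin θ ^ (n-3) *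
      (1 * Real.exp (-(∫ s in (0:ℝ)..t₀, σ (x' + (t₀ - s) • v') v')) *
       sigmaA σ k x (Real.cos θ • v' + Real.sin θ • w) *
       k x v' (Real.cos θ • v' + Real.sin θ • w)))) θ)
    (Set.indicator (Set.Ioo (0:ℝ) π) (fun _ => Real.exp (M * (τ + 1)) * Real.exp (M * τ) *
      (M + M * (((volume : Measure (EuclideanSpace ℝ (Fin n))).toSphere) Set.univ).toReal) * M)) hFmeas hbound hbint hlim
  have heq : ∀ᶠ ε in nhdsWithin (0:ℝ) (Set.Ioi 0),
      ε ^ (n-2) * L ε = ∫ θ, (Set.indicator (Set.Ioc (Real.arctan (ε / t₀)) (π - Real.arctan (ε / (τ - t₀))))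
      (fun θ => Real.sin θ ^ (n-3) * (attenuation σ (x + ε • w) (x' + (t₀ - ε * (Real.cos θ / Real.sin θ)) • v') *
        Real.exp (-(∫ s in (0:ℝ)..(t₀ - ε * (Real.cos θ / Real.sin θ)), σ (x' + ((t₀ - ε * (Real.cos θ / Real.sin θ)) - s) • v') v')) *
        sigmaA σ k (x + ε • w) (Real.cos θ • v' + Real.sin θ • w) *
        k (x' + (t₀ - ε * (Real.cos θ / Real.sin θ)) • v') v' (Real.cos θ • v' + Real.sin θ • w)))) θ ∂(volume : Measure ℝ) := by
    filter_upwards [self_mem_nhdsWithin] with ε hε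
    rw [Set.mem_Ioi] at hε
    rw [key ε hε, intervalIntegral.integral_of_le (hab ε hε),
      ← MeasureTheory.integral_indicator measurableSet_Ioc]
  have hval : (∫ θ, (Set.indicator (Set.Ioo (0:ℝ) π) (fun θ => Real.sin θ ^ (n-3) *
      (1 * Real.exp (-(∫ s in (0:ℝ)..t₀, σ (x' + (t₀ - s) • v') v')) *
       sigmaA σ k x (Real.cos θ • v' + Real.sin θ • w) *
       k x v' (Real.cos θ • v' + Real.sin θ • w)))) θ ∂(volume : Measure ℝ)) =
      attenuation σ x x' * ∫ θ in Set.Ioo (0:ℝ) π,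
        (Real.sin θ) ^ (n-3) * sigmaA σ k x (Real.cos θ • v' + Real.sin θ • w) *
          k x v' (Real.cos θ • v' + Real.sin θ • w) := by
    rw [MeasureTheory.integral_indicator measurableSet_Ioo]
    have hattx : attenuation σ x x' =
        Real.exp (-(∫ s in (0:ℝ)..t₀, σ (x' + (t₀ - s) • v') v')) := by
      rw [hx]; exact SSAux.att2_eq hv' (le_of_lt ht₀0)
    rw [hattx, ← MeasureTheory.integral_const_mul]
    apply MeasureTheory.setIntegral_congr_fun measurableSet_Ioo
    intro θ _
    beta_reduce
    ring
  rw [← hval]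
  exact Filter.Tendsto.congr' (Filter.EventuallyEq.symm heq) hmain

set_option maxHeartbeats 1000000 in
/-- Asymptotics of the single-scattering kernel near the ballistic segment, `n ≥ 3`:
`ε^{n−2} L(ε) → E(x,x') ∫₀^π sin^{n−3}θ σ_a(x, v(θ)) k(x, v', v(θ)) dθ` as `ε → 0⁺`. -/
theorem single_scattering_asymptotics_dim_ge_three {n : ℕ} (hn : 3 ≤ n)
    (X : Set (EuclideanSpace ℝ (Fin n))) (hXne : X.Nonempty)
    (hXb : Bornology.IsBounded X) (hXc : Convex ℝ X) (hXo : IsOpen X)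
    (σ : EuclideanSpace ℝ (Fin n) → EuclideanSpace ℝ (Fin n) → ℝ)
    (k : EuclideanSpace ℝ (Fin n) → EuclideanSpace ℝ (Fin n) →
      EuclideanSpace ℝ (Fin n) → ℝ)
    (hσc : ContinuousOn (fun p : EuclideanSpace ℝ (Fin n) × EuclideanSpace ℝ (Fin n) =>
      σ p.1 p.2) (Set.univ ×ˢ Metric.sphere 0 1))
    (hσb : ∃ M : ℝ, ∀ x v : EuclideanSpace ℝ (Fin n), v ∈ Metric.sphere (0 : EuclideanSpace ℝ (Fin n)) 1 →
      |σ x v| ≤ M)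
    (hkc : ContinuousOn (fun p : EuclideanSpace ℝ (Fin n) ×
      EuclideanSpace ℝ (Fin n) × EuclideanSpace ℝ (Fin n) => k p.1 p.2.1 p.2.2)
      (Set.univ ×ˢ Metric.sphere 0 1 ×ˢ Metric.sphere 0 1))
    (hkb : ∃ M : ℝ, ∀ x v v₁ : EuclideanSpace ℝ (Fin n),
      v ∈ Metric.sphere (0 : EuclideanSpace ℝ (Fin n)) 1 →
      v₁ ∈ Metric.sphere (0 : EuclideanSpace ℝ (Fin n)) 1 → |k x v v₁| ≤ M)
    (x' : EuclideanSpace ℝ (Fin n)) (hx' : x' ∈ closure X)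
    (v' : EuclideanSpace ℝ (Fin n)) (hv' : ‖v'‖ = 1)
    (henter : ∃ s : ℝ, 0 < s ∧ x' + s • v' ∈ X)
    (τ : ℝ) (hτ : τ = sSup {s : ℝ | 0 < s ∧ x' + s • v' ∈ X})
    (t₀ : ℝ) (ht₀ : t₀ ∈ Set.Ioo 0 τ)
    (x : EuclideanSpace ℝ (Fin n)) (hx : x = x' + t₀ • v')
    (w : EuclideanSpace ℝ (Fin n)) (hw : ‖w‖ = 1) (hwv : ⟪w, v'⟫ = 0)
    (L : ℝ → ℝ)
    (hL : ∀ ε : ℝ, 0 < ε → L ε =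
      ∫ t' in (0:ℝ)..τ,
        attenuation σ (x + ε • w) (x' + t' • v') * attenuation σ (x' + t' • v') x' *
        sigmaA σ k (x + ε • w)
          ((Real.sqrt ((t₀ - t')^2 + ε^2))⁻¹ • ((t₀ - t') • v' + ε • w)) *
        k (x' + t' • v') v'
          ((Real.sqrt ((t₀ - t')^2 + ε^2))⁻¹ • ((t₀ - t') • v' + ε • w)) *
        ((t' - t₀)^2 + ε^2) ^ (-(((n:ℝ) - 1)/2))) :
    Filter.Tendsto (fun ε : ℝ => ε ^ (n-2) * L ε) (nhdsWithin 0 (Set.Ioi 0))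
      (nhds (attenuation σ x x' *
        ∫ θ in Set.Ioo (0:ℝ) π,
          (Real.sin θ) ^ (n-3) *
            sigmaA σ k x (Real.cos θ • v' + Real.sin θ • w) *
            k x v' (Real.cos θ • v' + Real.sin θ • w))) := by
  classical
  obtain ⟨Mσ, hMσ⟩ := hσb
  obtain ⟨Mk, hMk⟩ := hkb
  have hcl1 : IsClosed ((Set.univ : Set (EuclideanSpace ℝ (Fin n))) ×ˢ
      Metric.sphere (0 : EuclideanSpace ℝ (Fin n)) 1) :=
    isClosed_univ.prod Metric.isClosed_sphere
  have hcl2 : IsClosed ((Set.univ : Set (EuclideanSpace ℝ (Fin n))) ×ˢ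
      Metric.sphere (0 : EuclideanSpace ℝ (Fin n)) 1 ×ˢ
      Metric.sphere (0 : EuclideanSpace ℝ (Fin n)) 1) :=
    isClosed_univ.prod (Metric.isClosed_sphere.prod Metric.isClosed_sphere)
  obtain ⟨gσ, hgσ⟩ := ContinuousMap.exists_restrict_eq (Y := ℝ) hcl1 ⟨_, hσc.restrict⟩
  obtain ⟨gk, hgk⟩ := ContinuousMap.exists_restrict_eq (Y := ℝ) hcl2 ⟨_, hkc.restrict⟩
  set σ' : EuclideanSpace ℝ (Fin n) → EuclideanSpace ℝ (Fin n) → ℝ :=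
    fun a b => gσ (a, b) with hσ'def
  set k' : EuclideanSpace ℝ (Fin n) → EuclideanSpace ℝ (Fin n) →
      EuclideanSpace ℝ (Fin n) → ℝ := fun a b c => gk (a, b, c) with hk'def
  have hσeq : ∀ a b : EuclideanSpace ℝ (Fin n), ‖b‖ = 1 → σ' a b = σ a b := by
    intro a b hb
    have hmem : ((a, b) : EuclideanSpace ℝ (Fin n) × EuclideanSpace ℝ (Fin n)) ∈
        (Set.univ ×ˢ Metric.sphere (0 : EuclideanSpace ℝ (Fin n)) 1) :=
      ⟨trivial, mem_sphere_zero_iff_norm.mpr hb⟩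
    have := ContinuousMap.congr_fun hgσ ⟨(a, b), hmem⟩
    simpa using this
  have hkeq : ∀ a b c : EuclideanSpace ℝ (Fin n), ‖b‖ = 1 → ‖c‖ = 1 →
      k' a b c = k a b c := by
    intro a b c hb hc
    have hmem : ((a, b, c) : EuclideanSpace ℝ (Fin n) × EuclideanSpace ℝ (Fin n) ×
        EuclideanSpace ℝ (Fin n)) ∈
        (Set.univ ×ˢ Metric.sphere (0 : EuclideanSpace ℝ (Fin n)) 1 ×ˢ
          Metric.sphere (0 : EuclideanSpace ℝ (Fin n)) 1) :=
      ⟨trivial, mem_sphere_zero_iff_norm.mpr hb, mem_sphere_zero_iff_norm.mpr hc⟩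
    have := ContinuousMap.congr_fun hgk ⟨(a, b, c), hmem⟩
    simpa using this
  have hσ'c : Continuous fun p : EuclideanSpace ℝ (Fin n) × EuclideanSpace ℝ (Fin n) =>
      σ' p.1 p.2 := gσ.continuous
  have hk'c : Continuous fun p : EuclideanSpace ℝ (Fin n) × EuclideanSpace ℝ (Fin n) ×
      EuclideanSpace ℝ (Fin n) => k' p.1 p.2.1 p.2.2 := gk.continuous
  have hσ'M : ∀ a b : EuclideanSpace ℝ (Fin n), ‖b‖ = 1 → |σ' a b| ≤ max Mσ Mk := by
    intro a b hb
    rw [hσeq a b hb]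
    exact le_trans (hMσ a b (mem_sphere_zero_iff_norm.mpr hb)) (le_max_left _ _)
  have hk'M : ∀ a b c : EuclideanSpace ℝ (Fin n), ‖b‖ = 1 → ‖c‖ = 1 →
      |k' a b c| ≤ max Mσ Mk := by
    intro a b c hb hc
    rw [hkeq a b c hb hc]
    exact le_trans (hMk a b c (mem_sphere_zero_iff_norm.mpr hb)
      (mem_sphere_zero_iff_norm.mpr hc)) (le_max_right _ _)
  have hatt : ∀ y z : EuclideanSpace ℝ (Fin n), attenuation σ y z = attenuation σ' y z := by
    intro y z
    by_cases h : y = z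
    · simp [attenuation, h]
    · unfold attenuation
      congr 2
      apply intervalIntegral.integral_congr
      intro s _
      exact (hσeq _ _ (SSAux.unit_dir h)).symm
  have hsig : ∀ (y v : EuclideanSpace ℝ (Fin n)), ‖v‖ = 1 →
      sigmaA σ k y v = sigmaA σ' k' y v := by
    intro y v hvu
    unfold sigmaA
    rw [hσeq _ _ hvu]
    congr 1
    apply MeasureTheory.integral_congr_ae
    apply Filter.Eventually.of_forall
    intro u
    exact (hkeq _ _ _ hvu (mem_sphere_zero_iff_norm.mp u.2)).symm
  have hL' : ∀ ε : ℝ, 0 < ε → L ε =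
      ∫ t' in (0:ℝ)..τ,
        attenuation σ' (x + ε • w) (x' + t' • v') * attenuation σ' (x' + t' • v') x' *
        sigmaA σ' k' (x + ε • w)
          ((Real.sqrt ((t₀ - t')^2 + ε^2))⁻¹ • ((t₀ - t') • v' + ε • w)) *
        k' (x' + t' • v') v'
          ((Real.sqrt ((t₀ - t')^2 + ε^2))⁻¹ • ((t₀ - t') • v' + ε • w)) *
        ((t' - t₀)^2 + ε^2) ^ (-(((n:ℝ) - 1)/2)) := by
    intro ε hε
    rw [hL ε hε]
    apply intervalIntegral.integral_congr
    intro t' _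
    have hu1 := SSAux.vdir_unit hv' hw hwv (a := t₀ - t') (b := ε) (ne_of_gt hε)
    beta_reduce
    rw [hatt, hatt, hsig _ _ hu1, hkeq _ _ _ hv' hu1]
  have haux := single_scattering_aux hn σ' k' hσ'c hk'c (max Mσ Mk) hσ'M hk'M
    x' v' hv' τ t₀ ht₀ x hx w hw hwv L hL'
  have hlim : attenuation σ' x x' *
      (∫ θ in Set.Ioo (0:ℝ) π,
        (Real.sin θ) ^ (n-3) *
          sigmaA σ' k' x (Real.cos θ • v' + Real.sin θ • w) *
          k' x v' (Real.cos θ • v' + Real.sin θ • w)) =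
      attenuation σ x x' *
      (∫ θ in Set.Ioo (0:ℝ) π,
        (Real.sin θ) ^ (n-3) *
          sigmaA σ k x (Real.cos θ • v' + Real.sin θ • w) *
          k x v' (Real.cos θ • v' + Real.sin θ • w)) := by
    rw [← hatt]
    congr 1
    apply MeasureTheory.setIntegral_congr_fun measurableSet_Ioo
    intro θ _
    beta_reduce
    rw [← hsig _ _ (SSAux.vv_unit hv' hw hwv θ), ← hkeq _ _ _ hv' (SSAux.vv_unit hv' hw hwv θ)]
  rw [← hlim]
  exact haux
end
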